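/- arXiv:math/0507603 — 7 statements merged into one kernel-verified Lean document; each statement's English description precedes it below -/
import Mathlib

section
/- Let X be any nonempty set, let k : X × X → [0,∞] be a nonnegative symmetric function, and let ∅ ≠ H ⊆ L ⊆ X. Then the rendezvous interval R(H,L) is nonempty; equivalently, M(H,L) ≤ M̄(H,L), i.e., sup_{n≥1} M_n(H,L) ≤ inf_{n≥1} M̄_n(H,L). -/
open MeasureTheory ENNReal
open scoped BigOperators

namespace Rendezvous

variable {X : Type*}

/-- The `n`-th Chebyshev constant `Mₙ(H,L)` of `L` with respect to `H` for the kernel `k`. -/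
noncomputable def chebMn (k : X → X → ℝ≥0∞) (n : ℕ) (H L : Set X) : ℝ≥0∞ :=
  ⨆ w : Fin n → H, ⨅ x : L, (∑ j, k (x : X) ((w j : X))) / (n : ℝ≥0∞)

/-- The `n`-th dual Chebyshev constant `M̄ₙ(H,L)`. -/
noncomputable def chebMnDual (k : X → X → ℝ≥0∞) (n : ℕ) (H L : Set X) : ℝ≥0∞ :=
  ⨅ w : Fin n → H, ⨆ x : L, (∑ j, k (x : X) ((w j : X))) / (n : ℝ≥0∞)

/-- The Chebyshev constant `M(H,L) = sup_{n ≥ 1} Mₙ(H,L)`. -/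
noncomputable def chebM (k : X → X → ℝ≥0∞) (H L : Set X) : ℝ≥0∞ :=
  ⨆ n : ℕ, ⨆ (_ : 1 ≤ n), chebMn k n H L

/-- The dual Chebyshev constant `M̄(H,L) = inf_{n ≥ 1} M̄ₙ(H,L)`. -/
noncomputable def chebMDual (k : X → X → ℝ≥0∞) (H L : Set X) : ℝ≥0∞ :=
  ⨅ n : ℕ, ⨅ (_ : 1 ≤ n), chebMnDual k n H L

/-- The potential `U^μ(x) = ∫ k(x,y) dμ(y)` of a measure. -/
noncomputable def pot [MeasurableSpace X] (k : X → X → ℝ≥0∞) (μ : Measure X) (x : X) : ℝ≥0∞ :=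
  ∫⁻ y, k x y ∂μ

/-- `μ` is a tight (inner regular w.r.t. compact sets) Borel probability measure
concentrated on `H`. -/
def TightProbOn [TopologicalSpace X] [MeasurableSpace X] (μ : Measure X) (H : Set X) : Prop :=
  IsProbabilityMeasure μ ∧ μ.InnerRegular ∧ μ Hᶜ = 0

/-- The quasi-uniform energy `q(H,L) = inf_{μ ∈ M₁(H)} sup_{x ∈ L} U^μ(x)`. -/
noncomputable def qUp [TopologicalSpace X] [MeasurableSpace X] (k : X → X → ℝ≥0∞)
    (H L : Set X) : ℝ≥0∞ :=
  ⨅ (μ : Measure X) (_ : TightProbOn μ H), ⨆ x : L, pot k μ (x : X)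

/-- The dual quasi-uniform energy `q̲(H,L) = sup_{μ ∈ M₁(H)} inf_{x ∈ L} U^μ(x)`. -/
noncomputable def qLow [TopologicalSpace X] [MeasurableSpace X] (k : X → X → ℝ≥0∞)
    (H L : Set X) : ℝ≥0∞ :=
  ⨆ (μ : Measure X) (_ : TightProbOn μ H), ⨅ x : L, pot k μ (x : X)

end Rendezvous

open Rendezvous

/-- For any nonempty set `X`, any nonnegative symmetric kernel
`k : X × X → [0,∞]`, and any `∅ ≠ H ⊆ L ⊆ X`, the rendezvous interval
`R(H,L) = [M(H,L), M̄(H,L)]` is nonempty, i.e. `M(H,L) ≤ M̄(H,L)`. -/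
theorem rendezvousIntervalNonempty {X : Type*} [Nonempty X]
    (k : X → X → ℝ≥0∞) (hsymm : ∀ x y : X, k x y = k y x)
    (H L : Set X) (hH : H.Nonempty) (hHL : H ⊆ L) :
    chebM k H L ≤ chebMDual k H L := by
  rw [chebM, chebMDual]
  apply iSup₂_le; intro n hn
  apply le_iInf₂; intro m hm
  rw [chebMn, chebMnDual]
  apply iSup_le; intro w
  apply le_iInf; intro v
  have hn0 : (n : ℝ≥0∞) ≠ 0 := by exact_mod_cast Nat.one_le_iff_ne_zero.mp hn
  have hm0 : (m : ℝ≥0∞) ≠ 0 := by exact_mod_cast Nat.one_le_iff_ne_zero.mp hm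
  have hnt : (n : ℝ≥0∞) ≠ ⊤ := ENNReal.natCast_ne_top n
  have hmt : (m : ℝ≥0∞) ≠ ⊤ := ENNReal.natCast_ne_top m
  set a := ⨅ x : L, (∑ j, k (x:X) ((w j : X))) / (n : ℝ≥0∞) with ha
  set b := ⨆ x : L, (∑ i, k (x:X) ((v i : X))) / (m : ℝ≥0∞) with hb
  have h1 : ∀ i : Fin m, a ≤ (∑ j, k ((v i : X)) ((w j : X))) / n := fun i =>
    iInf_le (fun x : L => (∑ j, k (x:X) ((w j : X))) / (n : ℝ≥0∞)) ⟨v i, hHL (v i).2⟩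
  have h2 : ∀ j : Fin n, (∑ i, k ((w j : X)) ((v i : X))) / m ≤ b := fun j =>
    le_iSup (fun x : L => (∑ i, k (x:X) ((v i : X))) / (m : ℝ≥0∞)) ⟨w j, hHL (w j).2⟩
  have key : a * m ≤ (∑ i : Fin m, ∑ j, k ((v i : X)) ((w j : X))) / n := by
    rw [div_eq_mul_inv, Finset.sum_mul]
    calc a * m = ∑ _i : Fin m, a := by
          simp [Finset.sum_const, mul_comm]
      _ ≤ _ := Finset.sum_le_sum fun i _ => by
          simpa [div_eq_mul_inv] using h1 i
  have key2 : (∑ j : Fin n, ∑ i, k ((w j : X)) ((v i : X))) / m ≤ b * n := by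
    rw [div_eq_mul_inv, Finset.sum_mul]
    calc ∑ j : Fin n, (∑ i, k ((w j : X)) ((v i : X))) * (m : ℝ≥0∞)⁻¹
        ≤ ∑ _j : Fin n, b := Finset.sum_le_sum fun j _ => by
          simpa [div_eq_mul_inv] using h2 j
      _ = b * n := by simp [Finset.sum_const, mul_comm]
  have hsum : (∑ i : Fin m, ∑ j, k ((v i : X)) ((w j : X)))
      = ∑ j : Fin n, ∑ i, k ((w j : X)) ((v i : X)) := by
    rw [Finset.sum_comm]
    exact Finset.sum_congr rfl fun j _ => Finset.sum_congr rfl fun i _ => hsymm _ _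
  have ha' : a = a * m / m := by
    rw [mul_div_assoc, ENNReal.div_self hm0 hmt, mul_one]
  have hb' : b = b * n / n := by
    rw [mul_div_assoc, ENNReal.div_self hn0 hnt, mul_one]
  calc a = a * m / m := ha'
    _ ≤ ((∑ i : Fin m, ∑ j, k ((v i : X)) ((w j : X))) / n) / m :=
        ENNReal.div_le_div_right key _
    _ = ((∑ j : Fin n, ∑ i, k ((w j : X)) ((v i : X))) / m) / n := by
        rw [hsum]; simp only [div_eq_mul_inv]; ring
    _ ≤ b * n / n := ENNReal.div_le_div_right key2 _
    _ = b := hb'.symm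
end

section
/- Let X be a nonzero real normed space. With the kernel k(x,y) := ‖x−y‖ on the unit sphere S_X, the rendezvous interval of S_X is nonempty: M(S_X) ≤ M̄(S_X), i.e., sup_{n≥1} M_n(S_X) ≤ inf_{n≥1} M̄_n(S_X). -/
open MeasureTheory ENNReal
open scoped BigOperators

open Rendezvous


lemma cheb_key {X : Type*} (k : X → X → ℝ≥0∞) (hk : ∀ x y, k x y = k y x)
    (H : Set X) {n m : ℕ} (hn : n ≠ 0) (hm : m ≠ 0) :
    chebMn k n H H ≤ chebMnDual k m H H := by
  refine iSup_le fun w => le_iInf fun v => ?_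
  set A := ⨅ x : H, (∑ j, k (x : X) ((w j : X))) / (n : ℝ≥0∞) with hA
  set B := ⨆ x : H, (∑ j, k (x : X) ((v j : X))) / (m : ℝ≥0∞) with hB
  have hn' : (n : ℝ≥0∞) ≠ 0 := Nat.cast_ne_zero.mpr hn
  have hm' : (m : ℝ≥0∞) ≠ 0 := Nat.cast_ne_zero.mpr hm
  have hnt : (n : ℝ≥0∞) ≠ ⊤ := ENNReal.natCast_ne_top n
  have hmt : (m : ℝ≥0∞) ≠ ⊤ := ENNReal.natCast_ne_top m
  have step1 : ∀ i : Fin m, A * n ≤ ∑ j, k ((v i : X)) ((w j : X)) := by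
    intro i
    have h := iInf_le (fun x : H => (∑ j, k (x : X) ((w j : X))) / (n : ℝ≥0∞)) (v i)
    exact (ENNReal.le_div_iff_mul_le (Or.inl hn') (Or.inl hnt)).mp h
  have h1 : A * n * m ≤ ∑ i : Fin m, ∑ j : Fin n, k ((v i : X)) ((w j : X)) := by
    calc A * n * m = ∑ _i : Fin m, A * n := by
          simp [Finset.sum_const, nsmul_eq_mul]; ring
      _ ≤ _ := Finset.sum_le_sum fun i _ => step1 i
  have step2 : ∀ j : Fin n, ∑ i, k ((w j : X)) ((v i : X)) ≤ B * m := by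
    intro j
    have h := le_iSup (fun x : H => (∑ i, k (x : X) ((v i : X))) / (m : ℝ≥0∞)) (w j)
    exact (ENNReal.div_le_iff_le_mul (Or.inl hm') (Or.inl hmt)).mp h
  have h2 : ∑ j : Fin n, ∑ i : Fin m, k ((w j : X)) ((v i : X)) ≤ B * m * n := by
    calc (∑ j : Fin n, ∑ i : Fin m, k ((w j : X)) ((v i : X)))
        ≤ ∑ _j : Fin n, B * m := Finset.sum_le_sum fun j _ => step2 j
      _ = B * m * n := by simp [Finset.sum_const, nsmul_eq_mul]; ring
  have hsym : (∑ i : Fin m, ∑ j : Fin n, k ((v i : X)) ((w j : X)))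
      = ∑ j : Fin n, ∑ i : Fin m, k ((w j : X)) ((v i : X)) := by
    rw [Finset.sum_comm]
    simp only [hk]
  have hmain : A * (n * m) ≤ B * (n * m) := by
    calc A * (n * m) = A * n * m := by ring
      _ ≤ _ := h1
      _ = _ := hsym
      _ ≤ B * m * n := h2
      _ = B * (n * m) := by ring
  have hnm : (n : ℝ≥0∞) * m ≠ 0 := mul_ne_zero hn' hm'
  have hnmt : (n : ℝ≥0∞) * m ≠ ⊤ := ENNReal.mul_ne_top hnt hmt
  exact (ENNReal.mul_le_mul_iff_left hnm hnmt).mp hmain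

/-- For a nonzero real normed space `X`, with the kernel
`k(x,y) = ‖x - y‖` on the unit sphere `S_X`, the rendezvous interval of `S_X` is
nonempty: `M(S_X) ≤ M̄(S_X)`. -/
theorem rendezvousIntervalNonempty_sphere {X : Type*} [NormedAddCommGroup X]
    [NormedSpace ℝ X] [Nontrivial X] :
    chebM (fun x y : X => edist x y) (Metric.sphere (0 : X) 1) (Metric.sphere (0 : X) 1)
      ≤ chebMDual (fun x y : X => edist x y) (Metric.sphere (0 : X) 1) (Metric.sphere (0 : X) 1) := by
  refine iSup₂_le fun n hn => le_iInf₂ fun m hm => ?_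
  exact cheb_key _ (fun x y => edist_comm x y) _
    (Nat.one_le_iff_ne_zero.mp hn) (Nat.one_le_iff_ne_zero.mp hm)
end

section
/- Let (Y,d) be a metric space and let k : Y × Y → ℝ be a positive, symmetric, bounded kernel such that the family {k(·,y) : y ∈ Y} is uniformly equicontinuous on Y (for every ε > 0 there is δ > 0 such that |k(x,y) − k(x',y)| < ε for all y ∈ Y whenever d(x,x') < δ). Then the average interval equals the rendezvous interval and both are nonempty: q̲(Y,Y) = M(Y) ≤ M̄(Y) = q(Y,Y); that is, A(Y) = R(Y) ≠ ∅. -/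
open MeasureTheory ENNReal
open scoped BigOperators

open Rendezvous

/-!
An empirical measure `(1/n) ∑ⱼ δ_{w j}` is a tight probability measure whose potential is the
Chebyshev average of the points `w j`, which gives `M ≤ q̲` and `q ≤ M̄`; symmetry of `k` gives
`M ≤ M̄` by double counting. Conversely, a tight probability measure lives, up to mass `ε`, on a
compact set, covered by finitely many `δ`-balls. Moving the mass of each ball to its centre
changes every potential by at most `ε`, by uniform equicontinuity, and rounding the resulting
weights to multiples of `1/N` turns this finitely supported measure into an empirical one.
-/

open Set Finset Metric
open scoped NNReal

namespace Rendezvous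

section Chebyshev

variable {X : Type*} {k : X → X → ℝ≥0∞}

theorem chebMn_le_chebMnDual (hsymm : ∀ x y, k x y = k y x) (H : Set X) {n m : ℕ}
    (hn : n ≠ 0) (hm : m ≠ 0) : chebMn k n H H ≤ chebMnDual k m H H := by
  refine iSup_le fun w => le_iInf fun v => ?_
  set T := ⨆ x : H, (∑ i, k x (v i)) / m
  have hT : ∀ j, ∑ i, k (w j) (v i) ≤ T * m := fun j =>
    (ENNReal.div_le_iff_le_mul (.inl (by simpa)) (.inl (by simp))).1 (le_iSup_of_le (w j) le_rfl)
  refine (ENNReal.mul_le_mul_iff_right (a := m) (by simpa) (by simp)).1 ?_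
  calc (m : ℝ≥0∞) * ⨅ x : H, (∑ j, k x (w j)) / n
      = ∑ _i : Fin m, ⨅ x : H, (∑ j, k x (w j)) / n := by simp
    _ ≤ ∑ i, (∑ j, k (v i) (w j)) / n := sum_le_sum fun i _ => iInf_le _ (v i)
    _ = (∑ j, ∑ i, k (w j) (v i)) / n := by
      simp only [div_eq_mul_inv, ← sum_mul, hsymm (v _)]
      rw [sum_comm]
    _ ≤ (∑ _j : Fin n, T * m) / n := by gcongr with j; exact hT j
    _ = m * T := by
      rw [sum_const, card_univ, Fintype.card_fin, nsmul_eq_mul, mul_comm,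
        ENNReal.mul_div_cancel_right (by simpa) (by simp), mul_comm]

theorem chebM_le_chebMDual (hsymm : ∀ x y, k x y = k y x) (H : Set X) :
    chebM k H H ≤ chebMDual k H H :=
  iSup₂_le fun _n hn => le_iInf₂ fun _m hm =>
    chebMn_le_chebMnDual hsymm H (Nat.one_le_iff_ne_zero.1 hn) (Nat.one_le_iff_ne_zero.1 hm)

end Chebyshev

section Empirical

variable {X : Type*} [MeasurableSpace X] [MeasurableSingletonClass X]

noncomputable def empiricalMeasure {n : ℕ} (w : Fin n → X) : Measure X :=
  (n : ℝ≥0∞)⁻¹ • ∑ j, Measure.dirac (w j)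

theorem pot_empiricalMeasure (k : X → X → ℝ≥0∞) {n : ℕ} (w : Fin n → X) (x : X) :
    pot k (empiricalMeasure w) x = (∑ j, k x (w j)) / n := by
  simp [pot, empiricalMeasure, ENNReal.div_eq_inv_mul]

variable [TopologicalSpace X]

instance innerRegular_dirac (x : X) : (Measure.dirac x).InnerRegular where
  innerRegular U _ r hr := by
    have hx : x ∈ U := by
      by_contra hx
      simp [Measure.dirac_apply, hx] at hr
    exact ⟨{x}, singleton_subset_iff.2 hx, isCompact_singleton, by simpa [hx] using hr⟩

theorem tightProbOn_empiricalMeasure {n : ℕ} (hn : n ≠ 0) (w : Fin n → X) :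
    TightProbOn (empiricalMeasure w) univ := by
  refine ⟨⟨?_⟩, by unfold empiricalMeasure; infer_instance, by simp⟩
  simp [empiricalMeasure, ENNReal.inv_mul_cancel (Nat.cast_ne_zero.2 hn)]

theorem chebM_le_qLow {k : X → X → ℝ≥0∞} : chebM k univ univ ≤ qLow k univ univ :=
  iSup₂_le fun _n hn => iSup_le fun w => by
    have hn := Nat.one_le_iff_ne_zero.1 hn
    simp_rw [← pot_empiricalMeasure]
    exact le_iSup₂_of_le (empiricalMeasure fun j => (w j : X))
      (tightProbOn_empiricalMeasure hn _) le_rfl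

theorem qUp_le_chebMDual {k : X → X → ℝ≥0∞} : qUp k univ univ ≤ chebMDual k univ univ :=
  le_iInf₂ fun _n hn => le_iInf fun w => by
    have hn := Nat.one_le_iff_ne_zero.1 hn
    simp_rw [← pot_empiricalMeasure]
    exact iInf₂_le_of_le (empiricalMeasure fun j => (w j : X))
      (tightProbOn_empiricalMeasure hn _) le_rfl

end Empirical

section Approximation

variable {X : Type*} [TopologicalSpace X] [MeasurableSpace X] {k : X → X → ℝ≥0∞}

theorem qLow_le_chebM
    (happrox : ∀ μ, TightProbOn μ univ → ∀ ε ≠ 0, ∃ n ≠ 0, ∃ w : Fin n → X,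
      ∀ x, pot k μ x ≤ (∑ j, k x (w j)) / n + ε) :
    qLow k univ univ ≤ chebM k univ univ := by
  refine iSup₂_le fun μ hμ => ENNReal.le_of_forall_pos_le_add fun ε hε _ => ?_
  obtain ⟨n, hn, w, hw⟩ := happrox μ hμ ε (by simpa using hε.ne')
  calc ⨅ x : (univ : Set X), pot k μ x
      ≤ ⨅ x : (univ : Set X), (∑ j, k x (w j)) / n + ε := iInf_mono fun x => hw x
    _ = (⨅ x : (univ : Set X), (∑ j, k x (w j)) / n) + ε := (ENNReal.iInf_add ..).symm
    _ ≤ chebM k univ univ + ε := by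
      gcongr
      exact le_iSup₂_of_le n (Nat.one_le_iff_ne_zero.2 hn)
        (le_iSup_of_le (fun j => ⟨w j, trivial⟩) le_rfl)

theorem chebMDual_le_qUp
    (happrox : ∀ μ, TightProbOn μ univ → ∀ ε ≠ 0, ∃ n ≠ 0, ∃ w : Fin n → X,
      ∀ x, (∑ j, k x (w j)) / n ≤ pot k μ x + ε) :
    chebMDual k univ univ ≤ qUp k univ univ := by
  refine le_iInf₂ fun μ hμ => ENNReal.le_of_forall_pos_le_add fun ε hε _ => ?_
  obtain ⟨n, hn, w, hw⟩ := happrox μ hμ ε (by simpa using hε.ne')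
  calc chebMDual k univ univ ≤ ⨆ x : (univ : Set X), (∑ j, k x (w j)) / n :=
        iInf₂_le_of_le n (Nat.one_le_iff_ne_zero.2 hn)
          (iInf_le_of_le (fun j => ⟨w j, trivial⟩) le_rfl)
    _ ≤ (⨆ x : (univ : Set X), pot k μ x) + ε :=
      iSup_le fun x => (hw x).trans <| by
        gcongr; exact le_iSup (fun x : (univ : Set X) => pot k μ x) x

end Approximation

section FiniteSums

variable {ι : Type*}

theorem sum_mul_le_sum_mul_add {s : Finset ι} {g a b e : ι → ℝ≥0∞} {C : ℝ≥0∞}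
    (hab : ∀ i ∈ s, a i ≤ b i + e i) (hg : ∀ i ∈ s, g i ≤ C) :
    ∑ i ∈ s, g i * a i ≤ ∑ i ∈ s, g i * b i + C * ∑ i ∈ s, e i :=
  calc ∑ i ∈ s, g i * a i ≤ ∑ i ∈ s, (g i * b i + C * e i) :=
        sum_le_sum fun i hi => by
          calc g i * a i ≤ g i * (b i + e i) := by gcongr; exact hab i hi
            _ = g i * b i + g i * e i := mul_add ..
            _ ≤ g i * b i + C * e i := by gcongr; exact hg i hi
    _ = _ := by rw [sum_add_distrib, mul_sum]

theorem exists_fin_sum_comp_eq {s : Finset ι} {c : ι → ℕ} {N : ℕ} (hc : ∑ i ∈ s, c i = N) :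
    ∃ w : Fin N → ι, ∀ g : ι → ℝ≥0∞, ∑ j, g (w j) = ∑ i ∈ s, c i * g i := by
  subst hc
  have hcard : Fintype.card ((i : s) × Fin (c i)) = ∑ i ∈ s, c i := by
    simp [Fintype.card_sigma, sum_attach s c]
  refine ⟨fun j => ((Fintype.equivFinOfCardEq hcard).symm j).1, fun g => ?_⟩
  rw [Equiv.sum_comp (Fintype.equivFinOfCardEq hcard).symm (fun x => g x.1), Fintype.sum_sigma]
  simp [sum_attach s (fun i => (c i : ℝ≥0∞) * g i)]

theorem exists_nat_weights [DecidableEq ι] {s : Finset ι} {i₀ : ι} (hi₀ : i₀ ∈ s)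
    {p : ι → ℝ≥0} (hp : ∑ i ∈ s, p i = 1) (N : ℕ) :
    ∃ c : ι → ℕ, ∑ i ∈ s, c i = N ∧ (∀ i, N * p i ≤ c i + 1) ∧
      ∀ i, (c i : ℝ≥0) ≤ N * p i + if i = i₀ then (#s : ℝ≥0) else 0 := by
  -- Round every `N * p i` down and give the missing mass (at most `#s`) to `i₀`.
  set F := ∑ i ∈ s, ⌊N * p i⌋₊
  have hFN : F ≤ N := by
    have : (F : ℝ≥0) ≤ N := calc
      (F : ℝ≥0) = ∑ i ∈ s, (⌊N * p i⌋₊ : ℝ≥0) := by push_cast [F]; rfl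
      _ ≤ ∑ i ∈ s, N * p i := sum_le_sum fun i _ => Nat.floor_le (by positivity)
      _ = N := by rw [← mul_sum, hp, mul_one]
    exact_mod_cast this
  have hNF : N ≤ F + #s := by
    have : (N : ℝ≥0) ≤ F + #s := calc
      (N : ℝ≥0) = ∑ i ∈ s, N * p i := by rw [← mul_sum, hp, mul_one]
      _ ≤ ∑ i ∈ s, ((⌊N * p i⌋₊ : ℝ≥0) + 1) := sum_le_sum fun i _ => (Nat.lt_floor_add_one _).le
      _ = F + #s := by push_cast [F, sum_add_distrib]; simp
    exact_mod_cast this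
  refine ⟨fun i => ⌊N * p i⌋₊ + if i = i₀ then N - F else 0, ?_, fun i => ?_, fun i => ?_⟩
  · rw [sum_add_distrib, sum_ite_eq' s i₀, if_pos hi₀]
    omega
  · exact (Nat.lt_floor_add_one _).le.trans (by gcongr; simp)
  · push_cast
    gcongr
    · exact Nat.floor_le (by positivity)
    · split_ifs
      · exact_mod_cast (Nat.sub_le_iff_le_add'.2 hNF)
      · rfl

theorem exists_fin_avg_approx_sum_mul {s : Finset ι} (hs : s.Nonempty) {p : ι → ℝ≥0}
    (hp : ∑ i ∈ s, p i = 1) {N : ℕ} (hN : N ≠ 0) :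
    ∃ w : Fin N → ι, ∀ (g : ι → ℝ≥0∞) (C : ℝ≥0∞), (∀ i ∈ s, g i ≤ C) →
      (∑ j, g (w j)) / N ≤ ∑ i ∈ s, g i * p i + C * (#s / N) ∧
      ∑ i ∈ s, g i * p i ≤ (∑ j, g (w j)) / N + C * (#s / N) := by
  classical
  obtain ⟨i₀, hi₀⟩ := hs
  obtain ⟨c, hcN, hpc, hcp⟩ := exists_nat_weights hi₀ hp N
  obtain ⟨w, hw⟩ := exists_fin_sum_comp_eq hcN
  have hN₀ : (N : ℝ≥0∞) ≠ 0 := by simpa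
  have hN₁ : (N : ℝ≥0∞) ≠ ⊤ := by simp
  have hc_le : ∀ i, (c i : ℝ≥0∞) / N ≤ p i + if i = i₀ then (#s : ℝ≥0∞) / N else 0 := by
    intro i
    refine ENNReal.div_le_of_le_mul ?_
    have := ENNReal.coe_le_coe.2 (hcp i)
    split_ifs at this ⊢
    · rw [add_mul, ENNReal.div_mul_cancel hN₀ hN₁, mul_comm]
      simpa using this
    · simpa [mul_comm] using this
  have hp_le : ∀ i, (p i : ℝ≥0∞) ≤ c i / N + 1 / N := by
    intro i
    rw [← ENNReal.add_div, ENNReal.le_div_iff_mul_le (.inl hN₀) (.inl hN₁), mul_comm]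
    exact_mod_cast hpc i
  refine ⟨w, fun g C hg => ?_⟩
  have havg : (∑ j, g (w j)) / N = ∑ i ∈ s, g i * (c i / N) := by
    simp only [hw, div_eq_mul_inv, sum_mul, mul_assoc, mul_comm (c _ : ℝ≥0∞)]
  rw [havg]
  constructor
  · convert sum_mul_le_sum_mul_add (fun i _ => hc_le i) hg using 3
    rw [sum_ite_eq' s i₀, if_pos hi₀]
  · convert sum_mul_le_sum_mul_add (fun i _ => hp_le i) hg using 3
    rw [sum_const, nsmul_eq_mul, mul_one_div]

end FiniteSums

def UniformEquicontinuousSnd {ι Y : Type*} [PseudoMetricSpace Y] (k : ι → Y → ℝ≥0∞) : Prop :=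
  ∀ ε ≠ 0, ∃ δ > 0, ∀ x z z', dist z z' < δ → k x z ≤ k x z' + ε

theorem uniformEquicontinuousSnd_ofReal {ι Y : Type*} [PseudoMetricSpace Y] {f : ι → Y → ℝ}
    (hf : ∀ ε > 0, ∃ δ > 0, ∀ x z z', dist z z' < δ → |f x z - f x z'| < ε) :
    UniformEquicontinuousSnd fun x z => ENNReal.ofReal (f x z) := by
  intro ε hε
  obtain ⟨r, -, hr₀, hrε⟩ := ENNReal.lt_iff_exists_real_btwn.1 (pos_iff_ne_zero.2 hε)
  obtain ⟨δ, hδ, hfδ⟩ := hf r (ENNReal.ofReal_pos.1 hr₀)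
  refine ⟨δ, hδ, fun x z z' hzz' => ?_⟩
  calc ENNReal.ofReal (f x z) ≤ ENNReal.ofReal (f x z' + r) :=
        ENNReal.ofReal_le_ofReal (by linarith [(abs_lt.1 (hfδ x z z' hzz')).2])
    _ ≤ ENNReal.ofReal (f x z') + ENNReal.ofReal r := ENNReal.ofReal_add_le
    _ ≤ ENNReal.ofReal (f x z') + ε := by gcongr

section Metric

variable {Y : Type*} [MeasurableSpace Y]

theorem lintegral_le_lintegral_add_of_le_on (μ : Measure Y) [IsProbabilityMeasure μ]
    {f g : Y → ℝ≥0∞} {K : Set Y} (hK : MeasurableSet K) {a b : ℝ≥0∞}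
    (hfK : ∀ z ∈ K, f z ≤ g z + a) (hf : ∀ z, f z ≤ g z + b) :
    ∫⁻ z, f z ∂μ ≤ ∫⁻ z, g z ∂μ + a + b * μ Kᶜ := by
  have hle : ∀ z, f z ≤ g z + (a + Kᶜ.indicator (fun _ => b) z) := fun z => by
    by_cases hz : z ∈ K
    · simpa [hz] using hfK z hz
    · rw [indicator_of_mem (mem_compl hz)]
      exact (hf z).trans (by gcongr; exact le_add_self)
  have hm : Measurable fun z => a + Kᶜ.indicator (fun _ => b) z :=
    measurable_const.add (measurable_const.indicator hK.compl)
  calc ∫⁻ z, f z ∂μ ≤ ∫⁻ z, g z + (a + Kᶜ.indicator (fun _ => b) z) ∂μ := lintegral_mono hle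
    _ = ∫⁻ z, g z ∂μ + a + b * μ Kᶜ := by
      rw [lintegral_add_right _ hm, lintegral_add_left (f := fun _ => a) measurable_const,
        lintegral_const, lintegral_indicator_const hK.compl, measure_univ, mul_one, add_assoc]

theorem exists_simpleFunc_dist_lt_of_isCompact [PseudoMetricSpace Y] [OpensMeasurableSpace Y]
    [Nonempty Y] {K : Set Y} (hK : IsCompact K) {δ : ℝ} (hδ : 0 < δ) :
    ∃ φ : SimpleFunc Y Y, ∀ z ∈ K, dist (φ z) z < δ := by
  obtain ⟨t, -, ht⟩ := hK.elim_nhds_subcover (fun z => ball z δ) fun z _ => ball_mem_nhds z hδ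
  let e : ℕ → Y := fun n => t.toList[n]?.getD (Classical.arbitrary Y)
  refine ⟨SimpleFunc.nearestPt e t.card, fun z hz => ?_⟩
  obtain ⟨y, hyt, hzy⟩ := mem_iUnion₂.1 (ht hz)
  obtain ⟨n, hn, rfl⟩ := List.mem_iff_getElem.1 (mem_toList.2 hyt)
  have hen : e n = t.toList[n] := by simp [e, List.getElem?_eq_getElem hn]
  have := SimpleFunc.edist_nearestPt_le e z (k := n) (N := t.card) (by simp at hn; omega)
  rw [hen] at this
  exact edist_lt_ofReal.1 (this.trans_lt (edist_lt_ofReal.2 (mem_ball'.1 hzy)))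

variable [MetricSpace Y] [OpensMeasurableSpace Y] (μ : Measure Y) [IsProbabilityMeasure μ]
  [μ.InnerRegular] {k : Y → Y → ℝ≥0∞} {C : ℝ≥0∞}

theorem exists_simpleFunc_pot_approx (hC : C ≠ ⊤) (hkC : ∀ x y, k x y ≤ C)
    (hk : UniformEquicontinuousSnd k) {ε : ℝ≥0∞} (hε : ε ≠ 0) :
    ∃ φ : SimpleFunc Y Y, ∀ x,
      pot k μ x ≤ ∑ y ∈ φ.range, k x y * μ (φ ⁻¹' {y}) + ε ∧
      ∑ y ∈ φ.range, k x y * μ (φ ⁻¹' {y}) ≤ pot k μ x + ε := by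
  have := nonempty_of_isProbabilityMeasure μ
  have hε₂ : ε / 2 ≠ 0 := (ENNReal.half_pos hε).ne'
  obtain ⟨δ, hδ, hkδ⟩ := hk (ε / 2) hε₂
  obtain ⟨K, -, hKc, hK⟩ := MeasurableSet.univ.exists_isCompact_sdiff_lt (μ := μ)
    (measure_ne_top μ univ) (ENNReal.div_pos_iff.2 ⟨hε₂, hC⟩).ne'
  rw [← compl_eq_univ_sdiff] at hK
  obtain ⟨φ, hφ⟩ := exists_simpleFunc_dist_lt_of_isCompact hKc hδ
  have hCK : C * μ Kᶜ ≤ ε / 2 := (by gcongr : C * μ Kᶜ ≤ C * (ε / 2 / C)).trans ENNReal.mul_div_le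
  have key : ∀ f g : Y → ℝ≥0∞, (∀ z ∈ K, f z ≤ g z + ε / 2) → (∀ z, f z ≤ C) →
      ∫⁻ z, f z ∂μ ≤ ∫⁻ z, g z ∂μ + ε := fun f g hfK hfC => calc
    ∫⁻ z, f z ∂μ ≤ ∫⁻ z, g z ∂μ + ε / 2 + C * μ Kᶜ :=
      lintegral_le_lintegral_add_of_le_on μ hKc.isClosed.measurableSet hfK
        fun z => (hfC z).trans le_add_self
    _ ≤ ∫⁻ z, g z ∂μ + (ε / 2 + ε / 2) := by rw [add_assoc]; gcongr
    _ = ∫⁻ z, g z ∂μ + ε := by rw [ENNReal.add_halves]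
  have hφpot : ∀ x, ∫⁻ z, k x (φ z) ∂μ = ∑ y ∈ φ.range, k x y * μ (φ ⁻¹' {y}) := fun x => by
    rw [← SimpleFunc.map_lintegral, ← SimpleFunc.lintegral_eq_lintegral]
    rfl
  refine ⟨φ, fun x => ⟨?_, ?_⟩⟩ <;> rw [← hφpot, pot]
  · exact key _ _ (fun z hz => hkδ x z (φ z) (dist_comm z (φ z) ▸ hφ z hz)) (hkC x)
  · exact key _ _ (fun z hz => hkδ x (φ z) z (hφ z hz)) fun z => hkC x (φ z)

theorem exists_fin_avg_approx_pot (hC : C ≠ ⊤) (hkC : ∀ x y, k x y ≤ C)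
    (hk : UniformEquicontinuousSnd k) {ε : ℝ≥0∞} (hε : ε ≠ 0) :
    ∃ n ≠ 0, ∃ w : Fin n → Y, ∀ x,
      (∑ j, k x (w j)) / n ≤ pot k μ x + ε ∧ pot k μ x ≤ (∑ j, k x (w j)) / n + ε := by
  have hε₂ : ε / 2 ≠ 0 := (ENNReal.half_pos hε).ne'
  obtain ⟨φ, hφ⟩ := exists_simpleFunc_pot_approx μ hC hkC hk hε₂
  set p : Y → ℝ≥0 := fun y => (μ (φ ⁻¹' {y})).toNNReal
  have hp : ∀ y, (p y : ℝ≥0∞) = μ (φ ⁻¹' {y}) := fun y => ENNReal.coe_toNNReal (measure_ne_top _ _)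
  have hp₁ : ∑ y ∈ φ.range, p y = 1 := by
    rw [← ENNReal.coe_inj, ENNReal.ofNNReal_finsetSum]
    simp [hp, φ.sum_range_measure_preimage_singleton]
  have hs : φ.range.Nonempty := ⟨φ (nonempty_of_isProbabilityMeasure μ).some, φ.mem_range_self _⟩
  obtain ⟨N, hN⟩ : ∃ N : ℕ, (#φ.range : ℝ≥0∞) * C / (ε / 2) < N :=
    ENNReal.exists_nat_gt (ENNReal.div_ne_top (ENNReal.mul_ne_top (by simp) hC) hε₂)
  have hN₀ : N ≠ 0 := by rintro rfl; simp at hN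
  have hCN : C * (#φ.range / N) ≤ ε / 2 := by
    rw [ENNReal.div_lt_iff (.inl hε₂) (.inr (ENNReal.mul_ne_top (by simp) hC))] at hN
    rw [← mul_div_assoc, mul_comm]
    exact ENNReal.div_le_of_le_mul' hN.le
  obtain ⟨w, hw⟩ := exists_fin_avg_approx_sum_mul hs hp₁ hN₀
  refine ⟨N, hN₀, w, fun x => ?_⟩
  obtain ⟨h₁, h₂⟩ := hw (k x) C fun y _ => hkC x y
  simp only [hp] at h₁ h₂
  constructor
  · calc (∑ j, k x (w j)) / N ≤ ∑ y ∈ φ.range, k x y * μ (φ ⁻¹' {y}) + ε / 2 := h₁.trans (by gcongr)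
      _ ≤ pot k μ x + ε / 2 + ε / 2 := by gcongr; exact (hφ x).2
      _ = pot k μ x + ε := by rw [add_assoc, ENNReal.add_halves]
  · calc pot k μ x ≤ ∑ y ∈ φ.range, k x y * μ (φ ⁻¹' {y}) + ε / 2 := (hφ x).1
      _ ≤ (∑ j, k x (w j)) / N + ε / 2 + ε / 2 := by gcongr; exact h₂.trans (by gcongr)
      _ = (∑ j, k x (w j)) / N + ε := by rw [add_assoc, ENNReal.add_halves]

end Metric

end Rendezvous

open Set

theorem average_eq_rendezvous_of_equicontinuous_general {Y : Type*} [MetricSpace Y]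
    [MeasurableSpace Y] [BorelSpace Y]
    (k : Y → Y → ℝ) (hsymm : ∀ x y : Y, k x y = k y x)
    (hbdd : ∃ C : ℝ, ∀ x y : Y, k x y ≤ C)
    (hequi : ∀ ε > (0 : ℝ), ∃ δ > (0 : ℝ), ∀ x x' y : Y,
      dist x x' < δ → |k x y - k x' y| < ε) :
    qLow (fun x y => ENNReal.ofReal (k x y)) (Set.univ : Set Y) Set.univ
        = chebM (fun x y => ENNReal.ofReal (k x y)) (Set.univ : Set Y) Set.univ ∧
    chebM (fun x y => ENNReal.ofReal (k x y)) (Set.univ : Set Y) Set.univ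
        ≤ chebMDual (fun x y => ENNReal.ofReal (k x y)) (Set.univ : Set Y) Set.univ ∧
    chebMDual (fun x y => ENNReal.ofReal (k x y)) (Set.univ : Set Y) Set.univ
        = qUp (fun x y => ENNReal.ofReal (k x y)) (Set.univ : Set Y) Set.univ := by
  obtain ⟨C, hC⟩ := hbdd
  have hequi' : UniformEquicontinuousSnd fun x z => ENNReal.ofReal (k x z) :=
    uniformEquicontinuousSnd_ofReal fun ε hε => (hequi ε hε).imp fun _ ⟨hδ, h⟩ =>
      ⟨hδ, fun x z z' hzz' => by rw [hsymm x z, hsymm x z']; exact h z z' x hzz'⟩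
  have approx (μ : Measure Y) (hμ : TightProbOn μ univ) {ε : ℝ≥0∞} (hε : ε ≠ 0) :=
    haveI := hμ.1
    haveI := hμ.2.1
    exists_fin_avg_approx_pot μ ENNReal.ofReal_ne_top
      (fun x y => ENNReal.ofReal_le_ofReal (hC x y)) hequi' hε
  refine ⟨le_antisymm (qLow_le_chebM fun μ hμ ε hε => ?_) chebM_le_qLow,
    chebM_le_chebMDual (fun x y => by rw [hsymm]) univ,
    le_antisymm (chebMDual_le_qUp fun μ hμ ε hε => ?_) qUp_le_chebMDual⟩
  · obtain ⟨n, hn, w, hw⟩ := approx μ hμ hε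
    exact ⟨n, hn, w, fun x => (hw x).2⟩
  · obtain ⟨n, hn, w, hw⟩ := approx μ hμ hε
    exact ⟨n, hn, w, fun x => (hw x).1⟩

/-- For a metric space `(Y,d)` and a positive, symmetric, bounded kernel
`k` such that `{k(·,y) : y ∈ Y}` is uniformly equicontinuous, the average interval
equals the rendezvous interval and both are nonempty:
`q̲(Y,Y) = M(Y) ≤ M̄(Y) = q(Y,Y)`. -/
theorem average_eq_rendezvous_of_equicontinuous {Y : Type*} [MetricSpace Y] [Nonempty Y]
    [MeasurableSpace Y] [BorelSpace Y]
    (k : Y → Y → ℝ) (hpos : ∀ x y : Y, 0 < k x y) (hsymm : ∀ x y : Y, k x y = k y x)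
    (hbdd : ∃ C : ℝ, ∀ x y : Y, k x y ≤ C)
    (hequi : ∀ ε > (0 : ℝ), ∃ δ > (0 : ℝ), ∀ x x' y : Y,
      dist x x' < δ → |k x y - k x' y| < ε) :
    qLow (fun x y => ENNReal.ofReal (k x y)) (Set.univ : Set Y) Set.univ
        = chebM (fun x y => ENNReal.ofReal (k x y)) (Set.univ : Set Y) Set.univ ∧
    chebM (fun x y => ENNReal.ofReal (k x y)) (Set.univ : Set Y) Set.univ
        ≤ chebMDual (fun x y => ENNReal.ofReal (k x y)) (Set.univ : Set Y) Set.univ ∧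
    chebMDual (fun x y => ENNReal.ofReal (k x y)) (Set.univ : Set Y) Set.univ
        = qUp (fun x y => ENNReal.ofReal (k x y)) (Set.univ : Set Y) Set.univ :=
  average_eq_rendezvous_of_equicontinuous_general k hsymm hbdd hequi
end

section
/- Let ν be a probability measure with finite support on a measurable space in which singletons are measurable, and let ε > 0. Then there exist m ∈ ℕ and points z_1,…,z_m, each belonging to the support of ν, such that the measure μ := (1/m)∑_{i=1}^m δ_{z_i} has the same support as ν and satisfies (1−ε)ν ≤ μ ≤ (1+ε)ν, i.e., (1−ε)ν(A) ≤ μ(A) ≤ (1+ε)ν(A) for every measurable set A. -/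
/-! Write `ν = ∑_{a ∈ F} ν{a} δ_a`. For `N` so large that `ε N ν{a} ≥ 1` for all atoms, the
multiplicities `k_a = ⌈N ν{a}⌉` satisfy `N ν{a} ≤ k_a ≤ (1 + ε) N ν{a}`; summing,
`N ≤ m ≤ (1 + ε) N` for `m = ∑ k_a`, so `(1 - ε) ν{a} ≤ ν{a} / (1 + ε) ≤ k_a / m ≤ (1 + ε) ν{a}`.
The points `z_i` list every atom `a` exactly `k_a` times. -/

open MeasureTheory ENNReal
open scoped BigOperators

open Rendezvous

theorem Nat.ceil_le_one_add_mul {K : Type*} [Field K] [LinearOrder K] [IsStrictOrderedRing K]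
    [FloorSemiring K] {x ε : K} (hε : 0 < ε) (hx : 1 ≤ ε * x) : (⌈x⌉₊ : K) ≤ (1 + ε) * x := by
  have hx₀ : 0 ≤ x := nonneg_of_mul_nonneg_right (by linarith) hε
  linarith [Nat.ceil_lt_add_one hx₀]

theorem Finset.exists_nat_weights_approx {ι : Type*} (F : Finset ι) (q : ι → ℝ)
    (hq : ∀ i ∈ F, 0 < q i) (hsum : ∑ i ∈ F, q i = 1) {ε : ℝ} (hε : 0 < ε) :
    ∃ k : ι → ℕ, ∀ i ∈ F, 0 < k i ∧ (1 - ε) * q i ≤ k i / (∑ j ∈ F, k j : ℕ) ∧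
      (k i / (∑ j ∈ F, k j : ℕ) : ℝ) ≤ (1 + ε) * q i := by
  set N : ℕ := ⌈∑ i ∈ F, (ε * q i)⁻¹⌉₊
  have hN : ∀ i ∈ F, 1 ≤ ε * (N * q i) := fun i hi => by
    have h : (ε * q i)⁻¹ ≤ N := (Finset.single_le_sum (fun j hj => (inv_pos.2
      (mul_pos hε (hq j hj))).le) hi).trans (Nat.le_ceil _)
    rw [inv_le_iff_one_le_mul₀' (mul_pos hε (hq i hi))] at h
    linarith
  refine ⟨fun i => ⌈N * q i⌉₊, fun i hi => ?_⟩
  have hN₀ : (0 : ℝ) < N :=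
    pos_of_mul_pos_left (pos_of_mul_pos_right (zero_lt_one.trans_le (hN i hi)) hε.le) (hq i hi).le
  have hk_lower : ∀ j, (N : ℝ) * q j ≤ ⌈N * q j⌉₊ := fun j => Nat.le_ceil _
  have hk_upper : ∀ j ∈ F, (⌈N * q j⌉₊ : ℝ) ≤ (1 + ε) * (N * q j) :=
    fun j hj => Nat.ceil_le_one_add_mul hε (hN j hj)
  set m : ℕ := ∑ j ∈ F, ⌈N * q j⌉₊
  have hm_lower : (N : ℝ) ≤ m := by
    calc (N : ℝ) = ∑ j ∈ F, N * q j := by rw [← Finset.mul_sum, hsum, mul_one]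
      _ ≤ m := by push_cast [m]; exact Finset.sum_le_sum fun j _ => hk_lower j
  have hm_upper : (m : ℝ) ≤ (1 + ε) * N := by
    calc (m : ℝ) ≤ ∑ j ∈ F, (1 + ε) * (N * q j) := by
          push_cast [m]; exact Finset.sum_le_sum hk_upper
      _ = (1 + ε) * N := by rw [← Finset.mul_sum, ← Finset.mul_sum, hsum, mul_one]
  have hm₀ : (0 : ℝ) < m := hN₀.trans_le hm_lower
  refine ⟨Nat.ceil_pos.2 (mul_pos hN₀ (hq i hi)), ?_, ?_⟩
  · rw [le_div_iff₀ hm₀]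
    have h : (1 - ε) * m ≤ N := by nlinarith [mul_le_mul_of_nonneg_left hm_lower hε.le]
    calc (1 - ε) * q i * m = q i * ((1 - ε) * m) := by ring
      _ ≤ q i * N := mul_le_mul_of_nonneg_left h (hq i hi).le
      _ ≤ _ := by rw [mul_comm]; exact hk_lower i
  · rw [div_le_iff₀ hm₀]
    calc (⌈N * q i⌉₊ : ℝ) ≤ (1 + ε) * (N * q i) := hk_upper i hi
      _ ≤ (1 + ε) * q i * m := by
        rw [mul_left_comm, mul_comm (N : ℝ)]
        exact mul_le_mul_of_nonneg_left hm_lower (by positivity [(hq i hi).le])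

theorem Finset.exists_nat_weights_approx_ennreal {ι : Type*} (F : Finset ι) (q : ι → ℝ≥0∞)
    (hq₀ : ∀ i ∈ F, q i ≠ 0) (hq_top : ∀ i ∈ F, q i ≠ ⊤) (hsum : ∑ i ∈ F, q i = 1) {ε : ℝ}
    (hε : 0 < ε) :
    ∃ k : ι → ℕ, ∀ i ∈ F, 0 < k i ∧
      ENNReal.ofReal (1 - ε) * q i ≤ ((∑ j ∈ F, k j : ℕ) : ℝ≥0∞)⁻¹ * k i ∧
      ((∑ j ∈ F, k j : ℕ) : ℝ≥0∞)⁻¹ * k i ≤ ENNReal.ofReal (1 + ε) * q i := by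
  obtain ⟨k, hk⟩ := F.exists_nat_weights_approx (fun i => (q i).toReal)
    (fun i hi => ENNReal.toReal_pos (hq₀ i hi) (hq_top i hi))
    (by rw [← ENNReal.toReal_sum hq_top, hsum, ENNReal.toReal_one]) hε
  refine ⟨k, fun i hi => ?_⟩
  obtain ⟨hk_pos, hlow, hup⟩ := hk i hi
  have hm_pos : 0 < ∑ j ∈ F, k j := hk_pos.trans_le (Finset.single_le_sum (by simp) hi)
  have hratio : ((∑ j ∈ F, k j : ℕ) : ℝ≥0∞)⁻¹ * k i
      = ENNReal.ofReal (k i / (∑ j ∈ F, k j : ℕ)) := by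
    rw [ENNReal.ofReal_div_of_pos (by exact_mod_cast hm_pos), ofReal_natCast, ofReal_natCast,
      ENNReal.div_eq_inv_mul]
  have hq : q i = ENNReal.ofReal (q i).toReal := (ENNReal.ofReal_toReal (hq_top i hi)).symm
  rw [hratio, hq, ← ENNReal.ofReal_mul' toReal_nonneg, ← ENNReal.ofReal_mul' toReal_nonneg]
  exact ⟨hk_pos, ENNReal.ofReal_le_ofReal hlow, ENNReal.ofReal_le_ofReal hup⟩

theorem MeasureTheory.Measure.smul_le_finsetSum_smul_dirac {α : Type*} [MeasurableSpace α]
    [MeasurableSingletonClass α] {ν : Measure α} {F : Finset α} (hν : ∀ᵐ a ∂ν, a ∈ F)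
    {r : ℝ≥0∞} {c : α → ℝ≥0∞} (h : ∀ a ∈ F, r * ν {a} ≤ c a) :
    r • ν ≤ ∑ a ∈ F, c a • Measure.dirac a := by
  rw [Measure.ae_mem_finset_iff.1 hν, Finset.smul_sum]
  exact Finset.sum_le_sum fun a ha => by rw [smul_smul]; gcongr; exact h a ha

theorem MeasureTheory.Measure.finsetSum_smul_dirac_le_smul {α : Type*} [MeasurableSpace α]
    [MeasurableSingletonClass α] {ν : Measure α} {F : Finset α} (hν : ∀ᵐ a ∂ν, a ∈ F)
    {r : ℝ≥0∞} {c : α → ℝ≥0∞} (h : ∀ a ∈ F, c a ≤ r * ν {a}) :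
    ∑ a ∈ F, c a • Measure.dirac a ≤ r • ν := by
  rw [Measure.ae_mem_finset_iff.1 hν, Finset.smul_sum]
  exact Finset.sum_le_sum fun a ha => by rw [smul_smul]; gcongr; exact h a ha

theorem Finset.exists_sum_dirac_eq_sum_nsmul_dirac {α : Type*} [MeasurableSpace α] (F : Finset α)
    (k : α → ℕ) :
    ∃ z : Fin (∑ a ∈ F, k a) → α, (∀ i, z i ∈ F) ∧ (∀ a ∈ F, 0 < k a → ∃ i, z i = a) ∧
      ∑ i, Measure.dirac (z i) = ∑ a ∈ F, k a • Measure.dirac a := by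
  set M : Multiset α := ∑ a ∈ F, Multiset.replicate (k a) a
  have hlen : M.toList.length = ∑ a ∈ F, k a := by simp [M, Multiset.card_sum]
  have hmem : ∀ a, a ∈ M.toList ↔ a ∈ F ∧ 0 < k a := fun a => by
    simp +contextual [M, Multiset.mem_sum, Multiset.mem_replicate, Nat.pos_iff_ne_zero]
  rw [← hlen]
  refine ⟨fun i => M.toList[i.1], fun i => ((hmem _).1 (List.getElem_mem _)).1,
    fun a ha hka => ?_, ?_⟩
  · obtain ⟨i, hi, rfl⟩ := List.mem_iff_getElem.1 ((hmem a).2 ⟨ha, hka⟩)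
    exact ⟨⟨i, hi⟩, rfl⟩
  · rw [Fin.sum_univ_fun_getElem (f := Measure.dirac), ← Multiset.sum_coe, ← Multiset.map_coe,
      Multiset.coe_toList, ← Multiset.mapAddMonoidHom_apply, map_sum, Multiset.sum_sum]
    simp

/-- For any `ε > 0` and any finitely supported probability measure `ν`
(on a measurable space with measurable singletons) there is a measure of the form
`μ = (1/m) ∑_{i=1}^m δ_{z_i}` having the same support as `ν` and satisfying
`(1-ε)ν ≤ μ ≤ (1+ε)ν`. -/
theorem finitelySupported_uniform_approx {α : Type*} [MeasurableSpace α]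
    [MeasurableSingletonClass α]
    (ν : Measure α) (hν : IsProbabilityMeasure ν)
    (F : Finset α) (hF : ν (F : Set α) = 1) (hFpos : ∀ z ∈ F, 0 < ν {z})
    (ε : ℝ) (hε : 0 < ε) :
    ∃ (m : ℕ) (_ : 0 < m) (z : Fin m → α),
      (∀ i, z i ∈ F) ∧ (∀ w ∈ F, ∃ i, z i = w) ∧
      ∀ A : Set α, MeasurableSet A →
        ENNReal.ofReal (1 - ε) * ν A
            ≤ ((m : ℝ≥0∞)⁻¹ • ∑ i : Fin m, MeasureTheory.Measure.dirac (z i)) A ∧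
        ((m : ℝ≥0∞)⁻¹ • ∑ i : Fin m, MeasureTheory.Measure.dirac (z i)) A
            ≤ ENNReal.ofReal (1 + ε) * ν A := by
  have hν_ae : ∀ᵐ a ∂ν, a ∈ F := (prob_compl_eq_zero_iff F.measurableSet).2 hF
  obtain ⟨k, hk⟩ := F.exists_nat_weights_approx_ennreal (fun a => ν {a})
    (fun a ha => (hFpos a ha).ne') (fun a _ => measure_ne_top ν _)
    (by rw [sum_measure_singleton, hF]) hε
  set m := ∑ a ∈ F, k a
  obtain ⟨z, hzF, hz_onto, hz_sum⟩ := F.exists_sum_dirac_eq_sum_nsmul_dirac k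
  have hμ : (m : ℝ≥0∞)⁻¹ • ∑ i, Measure.dirac (z i)
      = ∑ a ∈ F, ((m : ℝ≥0∞)⁻¹ * k a) • Measure.dirac a := by
    simp only [hz_sum, Finset.smul_sum, ← Nat.cast_smul_eq_nsmul ℝ≥0∞, smul_smul]
  obtain ⟨a, ha⟩ : F.Nonempty := Finset.nonempty_iff_ne_empty.2 fun h => by simp [h] at hF
  have hm_pos : 0 < m := (hk a ha).1.trans_le (Finset.single_le_sum (by simp) ha)
  refine ⟨m, hm_pos, z, hzF, fun w hw => hz_onto w hw (hk w hw).1, fun A _ => ?_⟩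
  rw [hμ, ← smul_eq_mul, ← Measure.smul_apply, ← smul_eq_mul, ← Measure.smul_apply]
  exact ⟨Measure.smul_le_finsetSum_smul_dirac hν_ae (fun a ha => (hk a ha).2.1) A,
    Measure.finsetSum_smul_dirac_le_smul hν_ae (fun a ha => (hk a ha).2.2) A⟩
end

section
/- Let X be a nonzero real normed space with unit sphere S_X and closed unit ball B_X, equipped with the kernel k(x,y) := ‖x−y‖. Then q(S_X,S_X) = q(S_X,B_X) and M̄(S_X,S_X) = M̄(S_X,B_X). -/
open MeasureTheory ENNReal
open scoped BigOperators

open Rendezvous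

section Aux

variable {X : Type*} [NormedAddCommGroup X] [NormedSpace ℝ X]

/-- Any point of the closed unit ball lies on a segment between two sphere points. -/
lemma exists_sphere_segment [Nontrivial X] {x : X} (hx : ‖x‖ ≤ 1) :
    ∃ p q : X, ‖p‖ = 1 ∧ ‖q‖ = 1 ∧ x ∈ segment ℝ p q := by
  rcases eq_or_lt_of_le hx with h1 | h1
  · exact ⟨x, x, h1, h1, by rw [segment_same]; exact Set.mem_singleton x⟩
  obtain ⟨v, hv⟩ := exists_ne (0 : X)
  have hv' : 0 < ‖v‖ := norm_pos_iff.mpr hv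
  set T : ℝ := 2 / ‖v‖ with hT
  have hT0 : 0 < T := div_pos two_pos hv'
  have hg : Continuous fun t : ℝ => ‖x + t • v‖ := by continuity
  have hbig : ∀ t : ℝ, |t| = T → 1 ≤ ‖x + t • v‖ := by
    intro t ht
    have h1' : ‖t • v‖ = 2 := by
      rw [norm_smul, Real.norm_eq_abs, ht, hT, div_mul_cancel₀ _ hv'.ne']
    have := norm_sub_le (x + t • v) x
    rw [add_sub_cancel_left] at this
    linarith [hx]
  -- t₁ ∈ (0, T] with ‖x + t₁ • v‖ = 1
  have h1mem : (1 : ℝ) ∈ Set.Icc ‖x + (0:ℝ) • v‖ ‖x + T • v‖ := by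
    constructor
    · simpa using h1.le
    · exact hbig T (abs_of_pos hT0)
  obtain ⟨t₁, ht₁mem, ht₁⟩ := intermediate_value_Icc hT0.le (hg.continuousOn) h1mem
  have h2mem : (1 : ℝ) ∈ Set.Icc ‖x + (0:ℝ) • v‖ ‖x + (-T) • v‖ := by
    constructor
    · simpa using h1.le
    · exact hbig (-T) (by rw [abs_neg, abs_of_pos hT0])
  obtain ⟨t₂, ht₂mem, ht₂⟩ := intermediate_value_Icc' (by linarith : -T ≤ (0:ℝ))
    (hg.continuousOn) h2mem
  have ht₁pos : 0 < t₁ := by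
    rcases eq_or_lt_of_le ht₁mem.1 with h | h
    · exfalso; rw [← h] at ht₁; simp at ht₁; linarith
    · exact h
  have ht₂neg : t₂ < 0 := by
    rcases eq_or_lt_of_le ht₂mem.2 with h | h
    · exfalso; rw [h] at ht₂; simp at ht₂; linarith
    · exact h
  have hd : 0 < t₁ - t₂ := by linarith
  refine ⟨x + t₁ • v, x + t₂ • v, ht₁, ht₂, ?_⟩
  refine ⟨-t₂ / (t₁ - t₂), t₁ / (t₁ - t₂), ?_, ?_, ?_, ?_⟩
  · exact div_nonneg (by linarith) hd.le
  · exact div_nonneg ht₁pos.le hd.le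
  · field_simp; ring
  · have h1 : (-t₂ / (t₁ - t₂)) + (t₁ / (t₁ - t₂)) = 1 := by field_simp; ring
    have h2 : (-t₂ / (t₁ - t₂)) * t₁ + (t₁ / (t₁ - t₂)) * t₂ = 0 := by field_simp; ring
    rw [smul_add, smul_add, smul_smul, smul_smul]
    rw [add_add_add_comm, ← add_smul, h1, one_smul, ← add_smul, h2, zero_smul, add_zero]

/-- Sub-convexity of the distance to a fixed point, in `ℝ≥0∞`. -/
lemma edist_comb (p q y : X) {a b : ℝ} (ha : 0 ≤ a) (hb : 0 ≤ b) (hab : a + b = 1) :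
    edist (a • p + b • q) y ≤ ENNReal.ofReal a * edist p y + ENNReal.ofReal b * edist q y := by
  have hy : a • y + b • y = y := by rw [← add_smul, hab, one_smul]
  have key : a • p + b • q - y = a • (p - y) + b • (q - y) := by
    rw [smul_sub, smul_sub]
    rw [show a • p - a • y + (b • q - b • y) = a • p + b • q - (a • y + b • y) by abel, hy]
  have hnorm : ‖a • p + b • q - y‖ ≤ a * ‖p - y‖ + b * ‖q - y‖ := by
    rw [key]
    calc ‖a • (p - y) + b • (q - y)‖ ≤ ‖a • (p - y)‖ + ‖b • (q - y)‖ := norm_add_le _ _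
      _ = a * ‖p - y‖ + b * ‖q - y‖ := by
        rw [norm_smul, norm_smul, Real.norm_eq_abs, Real.norm_eq_abs,
          abs_of_nonneg ha, abs_of_nonneg hb]
  rw [edist_dist, edist_dist, edist_dist, dist_eq_norm, dist_eq_norm, dist_eq_norm]
  calc ENNReal.ofReal ‖a • p + b • q - y‖ ≤ ENNReal.ofReal (a * ‖p - y‖ + b * ‖q - y‖) :=
        ENNReal.ofReal_le_ofReal hnorm
    _ = ENNReal.ofReal (a * ‖p - y‖) + ENNReal.ofReal (b * ‖q - y‖) :=
        ENNReal.ofReal_add (mul_nonneg ha (norm_nonneg _)) (mul_nonneg hb (norm_nonneg _))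
    _ = ENNReal.ofReal a * ENNReal.ofReal ‖p - y‖ + ENNReal.ofReal b * ENNReal.ofReal ‖q - y‖ := by
        rw [ENNReal.ofReal_mul ha, ENNReal.ofReal_mul hb]

/-- From an `ℝ≥0∞`-subconvexity estimate, get the max bound. -/
lemma comb_le_max {A B C : ℝ≥0∞} {a b : ℝ} (ha : 0 ≤ a) (hb : 0 ≤ b) (hab : a + b = 1)
    (h : C ≤ ENNReal.ofReal a * A + ENNReal.ofReal b * B) : C ≤ max A B := by
  calc C ≤ ENNReal.ofReal a * A + ENNReal.ofReal b * B := h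
    _ ≤ ENNReal.ofReal a * max A B + ENNReal.ofReal b * max A B := by
        gcongr
        · exact le_max_left _ _
        · exact le_max_right _ _
    _ = (ENNReal.ofReal a + ENNReal.ofReal b) * max A B := (add_mul _ _ _).symm
    _ = max A B := by
        rw [← ENNReal.ofReal_add ha hb, hab, ENNReal.ofReal_one, one_mul]

/-- For a subconvex function, the sup over the closed unit ball equals the sup
over the unit sphere. -/
lemma iSup_closedBall_eq_iSup_sphere [Nontrivial X] (f : X → ℝ≥0∞)
    (hf : ∀ p q : X, ∀ a b : ℝ, 0 ≤ a → 0 ≤ b → a + b = 1 →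
      f (a • p + b • q) ≤ max (f p) (f q)) :
    (⨆ x : (Metric.closedBall (0 : X) 1), f x) = ⨆ x : (Metric.sphere (0 : X) 1), f x := by
  apply le_antisymm
  · refine iSup_le fun ⟨x, hx⟩ => ?_
    rw [Metric.mem_closedBall, dist_zero_right] at hx
    obtain ⟨p, q, hp, hq, a, b, ha, hb, hab, hx'⟩ := exists_sphere_segment hx
    calc f x = f (a • p + b • q) := by rw [hx']
      _ ≤ max (f p) (f q) := hf p q a b ha hb hab
      _ ≤ ⨆ y : (Metric.sphere (0 : X) 1), f y := by
          apply max_le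
          · exact le_iSup_of_le ⟨p, by simp [hp]⟩ le_rfl
          · exact le_iSup_of_le ⟨q, by simp [hq]⟩ le_rfl
  · refine iSup_le fun ⟨x, hx⟩ => ?_
    exact le_iSup_of_le ⟨x, Metric.sphere_subset_closedBall hx⟩ le_rfl

end Aux

/-- For a nonzero real normed space `X` with unit sphere `S_X`, closed
unit ball `B_X` and kernel `k(x,y) = ‖x-y‖`, one has `q(S_X,S_X) = q(S_X,B_X)` and
`M̄(S_X,S_X) = M̄(S_X,B_X)`. -/
theorem q_and_chebDual_sphere_eq_ball {X : Type*} [NormedAddCommGroup X]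
    [NormedSpace ℝ X] [Nontrivial X] [MeasurableSpace X] [BorelSpace X] :
    qUp (fun x y : X => edist x y) (Metric.sphere (0 : X) 1) (Metric.sphere (0 : X) 1)
        = qUp (fun x y : X => edist x y) (Metric.sphere (0 : X) 1) (Metric.closedBall (0 : X) 1) ∧
    chebMDual (fun x y : X => edist x y) (Metric.sphere (0 : X) 1) (Metric.sphere (0 : X) 1)
        = chebMDual (fun x y : X => edist x y) (Metric.sphere (0 : X) 1)
            (Metric.closedBall (0 : X) 1) := by
  constructor
  · -- qUp
    unfold qUp
    congr 1
    ext μ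
    congr 1
    ext _
    refine (iSup_closedBall_eq_iSup_sphere (pot (fun x y : X => edist x y) μ) ?_).symm
    intro p q a b ha hb hab
    apply comb_le_max ha hb hab
    have hmp : Measurable fun y : X => ENNReal.ofReal a * edist p y :=
      ((continuous_const.edist continuous_id).measurable).const_mul _
    calc pot (fun x y : X => edist x y) μ (a • p + b • q)
        = ∫⁻ y, edist (a • p + b • q) y ∂μ := rfl
      _ ≤ ∫⁻ y, (ENNReal.ofReal a * edist p y + ENNReal.ofReal b * edist q y) ∂μ :=
          lintegral_mono fun y => edist_comb p q y ha hb hab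
      _ = (∫⁻ y, ENNReal.ofReal a * edist p y ∂μ) + ∫⁻ y, ENNReal.ofReal b * edist q y ∂μ :=
          lintegral_add_left hmp _
      _ = ENNReal.ofReal a * pot (fun x y : X => edist x y) μ p
            + ENNReal.ofReal b * pot (fun x y : X => edist x y) μ q := by
          rw [lintegral_const_mul' _ _ ENNReal.ofReal_ne_top,
            lintegral_const_mul' _ _ ENNReal.ofReal_ne_top]; rfl
  · -- chebMDual
    unfold chebMDual chebMnDual
    congr 1
    ext n
    congr 1
    ext _
    congr 1
    ext w
    refine (iSup_closedBall_eq_iSup_sphere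
      (fun x => (∑ j, edist x ((w j : X))) / (n : ℝ≥0∞)) ?_).symm
    intro p q a b ha hb hab
    apply comb_le_max ha hb hab
    calc (∑ j, edist (a • p + b • q) ((w j : X))) / (n : ℝ≥0∞)
        ≤ (∑ j, (ENNReal.ofReal a * edist p ((w j : X))
            + ENNReal.ofReal b * edist q ((w j : X)))) / (n : ℝ≥0∞) := by
          gcongr with j _
          exact edist_comb p q _ ha hb hab
      _ = (ENNReal.ofReal a * ∑ j, edist p ((w j : X))
            + ENNReal.ofReal b * ∑ j, edist q ((w j : X))) / (n : ℝ≥0∞) := by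
          rw [Finset.sum_add_distrib, Finset.mul_sum, Finset.mul_sum]
      _ = ENNReal.ofReal a * ((∑ j, edist p ((w j : X))) / (n : ℝ≥0∞))
            + ENNReal.ofReal b * ((∑ j, edist q ((w j : X))) / (n : ℝ≥0∞)) := by
          simp only [div_eq_mul_inv]; ring
end

section
/- Let X be a real normed space and let (X_n) be an increasing sequence of linear subspaces of X such that ⋃_{n=1}^∞ X_n is dense in X. Suppose each X_n carries a norm ‖·‖_n making (X_n,‖·‖_n) a normed space, and suppose lim_{n→∞} sup_{x ∈ X_n ∩ S_X} |1 − ‖x‖_n| = 0, where S_X is the unit sphere of X. For each n let ρ_n ∈ R(S_{(X_n,‖·‖_n)}), the rendezvous interval of the unit sphere of (X_n,‖·‖_n) with kernel the ‖·‖_n-distance. Then every accumulation point ρ of the sequence (ρ_n) belongs to R(S_X), the rendezvous interval of S_X with kernel k(x,y) := ‖x−y‖. -/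
open MeasureTheory ENNReal
open scoped BigOperators

open Rendezvous

/-!
Fix `n` points `w` on `S_X` and `ε > 0`. For all large `m` the norms `‖·‖` and `‖·‖_m` agree on
`X_m` up to a factor `1 ± ε`, so approximating each `w j` from the dense union and renormalizing in
`‖·‖_m` gives points `w'` on the sphere of `X_m`, while every `x` on that sphere is sent to
`x / ‖x‖ ∈ S_X`; under this correspondence each distance `‖·‖_m(x - w' j)` moves by `O(ε)`.
Hence `inf_{S_X} (1/n) ∑ ‖· - w j‖ ≤ M(S_m) + ε ≤ ρ_m + ε` and
`ρ_m ≤ M̄(S_m) ≤ sup_{S_X} (1/n) ∑ ‖· - w j‖ + ε` for large `m`, and both are closed conditions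
on `ρ_m`, so they pass to every cluster point.
-/

open Filter

section SphereComparison

variable {X : Type*} [NormedAddCommGroup X] [NormedSpace ℝ X]

theorem norm_inv_norm_smul_sub_inv_smul_le {z : X} {t ε : ℝ} (hz : z ≠ 0) (hε : ε ≤ 1 / 2)
    (h : |‖z‖ - t| ≤ ε * ‖z‖) : ‖‖z‖⁻¹ • z - t⁻¹ • z‖ ≤ 2 * ε := by
  have hz₀ : 0 < ‖z‖ := norm_pos_iff.2 hz
  obtain ⟨h₁, h₂⟩ := abs_le.1 h
  have ht : ‖z‖ / 2 ≤ t := by nlinarith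
  have ht₀ : 0 < t := by linarith
  rw [← sub_smul, norm_smul, Real.norm_eq_abs, inv_sub_inv hz₀.ne' ht₀.ne', abs_div,
    abs_sub_comm, abs_mul, abs_of_pos hz₀, abs_of_pos ht₀]
  calc |‖z‖ - t| / (‖z‖ * t) * ‖z‖ = |‖z‖ - t| / t := by field_simp
    _ ≤ ε * ‖z‖ / t := by gcongr
    _ ≤ 2 * ε := by rw [div_le_iff₀ ht₀]; nlinarith [abs_nonneg (‖z‖ - t)]

theorem norm_inv_norm_smul_sub_le {y w : X} (hw : ‖w‖ = 1) :
    ‖‖y‖⁻¹ • y - w‖ ≤ 2 * ‖y - w‖ := by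
  rcases eq_or_ne y 0 with rfl | hy
  · simp [hw]
  have hy₀ : 0 < ‖y‖ := norm_pos_iff.2 hy
  have hrescale : ‖‖y‖⁻¹ • y - y‖ = |‖w‖ - ‖y‖| := by
    calc ‖‖y‖⁻¹ • y - y‖ = |(‖y‖⁻¹ - 1) * ‖y‖| := by
          rw [abs_mul, abs_of_pos hy₀, ← Real.norm_eq_abs, ← norm_smul, sub_smul, one_smul]
      _ = |‖w‖ - ‖y‖| := by rw [sub_mul, inv_mul_cancel₀ hy₀.ne', one_mul, hw]
  calc ‖‖y‖⁻¹ • y - w‖ ≤ ‖‖y‖⁻¹ • y - y‖ + ‖y - w‖ := norm_sub_le_norm_sub_add_norm_sub _ _ _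
    _ ≤ ‖w - y‖ + ‖y - w‖ := by rw [hrescale]; gcongr; exact abs_norm_sub_norm_le w y
    _ = 2 * ‖y - w‖ := by rw [norm_sub_rev]; ring

variable {V : Submodule ℝ X} {N : X → ℝ} {ε : ℝ}

theorem abs_norm_sub_le_mul_norm_of_sphere (hsmul : ∀ x ∈ V, ∀ c : ℝ, N (c • x) = |c| * N x)
    (hsphere : ∀ x ∈ V, ‖x‖ = 1 → |1 - N x| ≤ ε) {z : X} (hz : z ∈ V) :
    |‖z‖ - N z| ≤ ε * ‖z‖ := by
  rcases eq_or_ne z 0 with rfl | hz₀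
  · simpa using hsmul 0 V.zero_mem 0
  have hunit : ‖‖z‖⁻¹ • z‖ = 1 := norm_smul_inv_norm hz₀
  have hz_eq : N z = ‖z‖ * N (‖z‖⁻¹ • z) := by
    rw [hsmul z hz, abs_inv, abs_norm, mul_inv_cancel_left₀ (norm_ne_zero_iff.2 hz₀)]
  calc |‖z‖ - N z| = ‖z‖ * |1 - N (‖z‖⁻¹ • z)| := by
        rw [hz_eq, ← mul_one_sub, abs_mul, abs_norm]
    _ ≤ ‖z‖ * ε := by gcongr; exact hsphere _ (V.smul_mem _ hz) hunit
    _ = ε * ‖z‖ := mul_comm _ _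

section NormComparable

variable (hV : ∀ z ∈ V, |‖z‖ - N z| ≤ ε * ‖z‖)
include hV

theorem ne_zero_of_apply_eq_one {x : X} (hx : x ∈ V) (hNx : N x = 1) : x ≠ 0 := by
  rintro rfl
  have := hV 0 hx
  norm_num [hNx] at this

theorem norm_le_two_of_apply_eq_one (hε : ε ≤ 1 / 2) {x : X} (hx : x ∈ V) (hNx : N x = 1) :
    ‖x‖ ≤ 2 := by
  nlinarith [(abs_le.1 (hV x hx)).2, norm_nonneg x]

theorem norm_sub_inv_norm_smul_le (hε : ε ≤ 1 / 2) {x : X} (hx : x ∈ V) (hNx : N x = 1) :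
    ‖x - ‖x‖⁻¹ • x‖ ≤ 2 * ε := by
  have h := norm_inv_norm_smul_sub_inv_smul_le (ne_zero_of_apply_eq_one hV hx hNx) hε
    (hNx ▸ hV x hx)
  rwa [inv_one, one_smul, norm_sub_rev] at h

theorem exists_apply_eq_one_norm_sub_le (hsmul : ∀ x ∈ V, ∀ c : ℝ, N (c • x) = |c| * N x)
    (hε : ε ≤ 1 / 2) {y w : X} (hy : y ∈ V) (hw : ‖w‖ = 1) (hyw : ‖y - w‖ ≤ ε) :
    ∃ w' ∈ V, N w' = 1 ∧ ‖w' - w‖ ≤ 4 * ε := by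
  have hy_norm : 1 / 2 ≤ ‖y‖ := by
    have := norm_sub_norm_le w y
    rw [hw, norm_sub_rev] at this
    linarith
  have hy₀ : y ≠ 0 := norm_pos_iff.1 (by linarith)
  have hNy : 0 < N y := by nlinarith [(abs_le.1 (hV y hy)).2]
  refine ⟨(N y)⁻¹ • y, V.smul_mem _ hy, ?_, ?_⟩
  · rw [hsmul y hy, abs_of_pos (inv_pos.2 hNy), inv_mul_cancel₀ hNy.ne']
  calc ‖(N y)⁻¹ • y - w‖ ≤ ‖(N y)⁻¹ • y - ‖y‖⁻¹ • y‖ + ‖‖y‖⁻¹ • y - w‖ :=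
        norm_sub_le_norm_sub_add_norm_sub _ _ _
    _ ≤ 2 * ε + 2 * ‖y - w‖ := by
        gcongr
        · rw [norm_sub_rev]; exact norm_inv_norm_smul_sub_inv_smul_le hy₀ hε (hV y hy)
        · exact norm_inv_norm_smul_sub_le hw
    _ ≤ 4 * ε := by linarith

theorem abs_apply_sub_sub_norm_sub_le (hε : ε ≤ 1 / 2) {x w' w : X} (hx : x ∈ V)
    (hNx : N x = 1) (hw' : w' ∈ V) (hNw' : N w' = 1) (hw'w : ‖w' - w‖ ≤ 4 * ε) :
    |N (x - w') - ‖‖x‖⁻¹ • x - w‖| ≤ 10 * ε := by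
  have hε₀ : 0 ≤ ε := by linarith [norm_nonneg (w' - w)]
  have hxw' : ‖x - w'‖ ≤ 4 :=
    (norm_sub_le _ _).trans (by linarith [norm_le_two_of_apply_eq_one hV hε hx hNx,
      norm_le_two_of_apply_eq_one hV hε hw' hNw'])
  have hcompare : |N (x - w') - ‖x - w'‖| ≤ 4 * ε := by
    rw [abs_sub_comm]
    nlinarith [hV _ (V.sub_mem hx hw')]
  have hmove : |‖x - w'‖ - ‖‖x‖⁻¹ • x - w‖| ≤ 6 * ε :=
    calc |‖x - w'‖ - ‖‖x‖⁻¹ • x - w‖| ≤ ‖(x - w') - (‖x‖⁻¹ • x - w)‖ := abs_norm_sub_norm_le _ _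
      _ = ‖(x - ‖x‖⁻¹ • x) - (w' - w)‖ := by congr 1; abel
      _ ≤ ‖x - ‖x‖⁻¹ • x‖ + ‖w' - w‖ := norm_sub_le _ _
      _ ≤ 6 * ε := by linarith [norm_sub_inv_norm_smul_le hV hε hx hNx]
  calc |N (x - w') - ‖‖x‖⁻¹ • x - w‖|
      ≤ |N (x - w') - ‖x - w'‖| + |‖x - w'‖ - ‖‖x‖⁻¹ • x - w‖| := abs_sub_le _ _ _
    _ ≤ 10 * ε := by linarith

end NormComparable

end SphereComparison

theorem eventually_exists_sphere_correspondence {X : Type*} [NormedAddCommGroup X]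
    [NormedSpace ℝ X] {E : ℕ → Submodule ℝ X} (hmono : Monotone E)
    (hdense : Dense (⋃ n, (E n : Set X))) {N : ℕ → X → ℝ}
    (hN_smul : ∀ n, ∀ x ∈ E n, ∀ c : ℝ, N n (c • x) = |c| * N n x)
    (hN_conv : ∀ ε > (0 : ℝ), ∃ n₀ : ℕ, ∀ n ≥ n₀, ∀ x ∈ E n, ‖x‖ = 1 → |1 - N n x| ≤ ε)
    {n : ℕ} (w : Fin n → Metric.sphere (0 : X) 1) {ε : ℝ} (hε : 0 < ε) :
    ∀ᶠ m in atTop, ∃ w' : Fin n → {x : X | x ∈ E m ∧ N m x = 1},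
      ∀ x ∈ {x : X | x ∈ E m ∧ N m x = 1}, ∃ v ∈ Metric.sphere (0 : X) 1,
        ∀ j, |N m (x - w' j) - ‖v - w j‖| ≤ ε := by
  set δ := min (1 / 2) (ε / 10)
  have hδ : 0 < δ := lt_min (by norm_num) (by positivity)
  have hcomp : ∀ᶠ m in atTop, ∀ z ∈ E m, |‖z‖ - N m z| ≤ δ * ‖z‖ := by
    obtain ⟨n₀, hn₀⟩ := hN_conv δ hδ
    exact eventually_atTop.2 ⟨n₀, fun m hm z hz =>
      abs_norm_sub_le_mul_norm_of_sphere (hN_smul m) (hn₀ m hm) hz⟩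
  have happrox : ∀ j, ∃ y : X, ‖y - (w j : X)‖ ≤ δ ∧ ∀ᶠ m in atTop, y ∈ E m := by
    intro j
    obtain ⟨y, hyU, hyw⟩ := Metric.mem_closure_iff.1 (hdense (w j)) δ hδ
    obtain ⟨k, hk⟩ := Set.mem_iUnion.1 hyU
    exact ⟨y, by rw [← dist_eq_norm, dist_comm]; exact hyw.le,
      eventually_atTop.2 ⟨k, fun m hm => hmono hm hk⟩⟩
  choose y hyw hyE using happrox
  filter_upwards [hcomp, eventually_all.2 hyE] with m hm hym
  choose w' hw'E hw'N hw'w using fun j => exists_apply_eq_one_norm_sub_le hm (hN_smul m)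
    (min_le_left _ _) (hym j) (mem_sphere_zero_iff_norm.1 (w j).2) (hyw j)
  refine ⟨fun j => ⟨w' j, hw'E j, hw'N j⟩, fun x ⟨hx, hNx⟩ => ⟨‖x‖⁻¹ • x, ?_, fun j => ?_⟩⟩
  · exact mem_sphere_zero_iff_norm.2 (norm_smul_inv_norm (ne_zero_of_apply_eq_one hm hx hNx))
  · calc _ ≤ 10 * δ :=
          abs_apply_sub_sub_norm_sub_le hm (min_le_left _ _) hx hNx (hw'E j) (hw'N j) (hw'w j)
      _ ≤ ε := by linarith [min_le_right (1 / 2) (ε / 10)]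

theorem ENNReal.sum_div_le_sum_div_add {n : ℕ} (hn : n ≠ 0) {a b : Fin n → ℝ≥0∞} {c : ℝ≥0∞}
    (h : ∀ j, a j ≤ b j + c) : (∑ j, a j) / n ≤ (∑ j, b j) / n + c :=
  calc (∑ j, a j) / n ≤ (∑ j, (b j + c)) / n := by gcongr with j; exact h j
    _ = (∑ j, b j) / n + c := by
      rw [Finset.sum_add_distrib, Finset.sum_const, Finset.card_univ, Fintype.card_fin,
        nsmul_eq_mul, ENNReal.add_div, mul_comm,
        ENNReal.mul_div_cancel_right (Nat.cast_ne_zero.2 hn) (ENNReal.natCast_ne_top n)]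

theorem ENNReal.ofReal_le_ofReal_add_of_abs_sub_le {a b ε : ℝ} (h : |a - b| ≤ ε) :
    ENNReal.ofReal a ≤ ENNReal.ofReal b + ENNReal.ofReal ε :=
  (ENNReal.ofReal_le_ofReal (by linarith [(abs_le.1 h).2])).trans ENNReal.ofReal_add_le

theorem le_of_mapClusterPt_of_eventually_le_add {ι : Type*} {l : Filter ι} {u : ι → ℝ≥0∞}
    {a r : ℝ≥0∞} (hr : MapClusterPt r l u)
    (h : ∀ ε : ℝ, 0 < ε → ∀ᶠ i in l, a ≤ u i + ENNReal.ofReal ε) : a ≤ r := by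
  refine ENNReal.le_of_forall_pos_le_add fun ε hε _ => ?_
  have hclosed : IsClosed {y : ℝ≥0∞ | a ≤ y + ε} :=
    isClosed_le continuous_const (continuous_id.add continuous_const)
  have hev := h ε hε
  simp_rw [ENNReal.ofReal_coe_nnreal] at hev
  exact hclosed.mem_of_mapClusterPt hr hev

theorem mapClusterPt_le_of_eventually_le_add {ι : Type*} {l : Filter ι} {u : ι → ℝ≥0∞}
    {b r : ℝ≥0∞} (hr : MapClusterPt r l u)
    (h : ∀ ε : ℝ, 0 < ε → ∀ᶠ i in l, u i ≤ b + ENNReal.ofReal ε) : r ≤ b := by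
  refine ENNReal.le_of_forall_pos_le_add fun ε hε _ => ?_
  have hev := h ε hε
  simp_rw [ENNReal.ofReal_coe_nnreal] at hev
  exact isClosed_Iic.mem_of_mapClusterPt hr hev

namespace Rendezvous

variable {X : Type*} {k k' : X → X → ℝ≥0∞} {L H' L' : Set X} {n : ℕ} {c : ℝ≥0∞}

theorem iInf_le_chebM_add (hn : 1 ≤ n) {w : Fin n → X} (w' : Fin n → H')
    (h : ∀ x' ∈ L', ∃ x ∈ L, ∀ j, k x (w j) ≤ k' x' (w' j) + c) :
    ⨅ x : L, (∑ j, k x (w j)) / n ≤ chebM k' H' L' + c :=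
  calc ⨅ x : L, (∑ j, k x (w j)) / n ≤ (⨅ x' : L', (∑ j, k' x' (w' j)) / n) + c := by
        rw [ENNReal.iInf_add]
        refine le_iInf fun x' => ?_
        obtain ⟨x, hx, hxj⟩ := h x' x'.2
        exact (iInf_le _ ⟨x, hx⟩).trans (ENNReal.sum_div_le_sum_div_add (by omega) hxj)
    _ ≤ chebMn k' n H' L' + c := by gcongr; exact le_iSup_of_le w' le_rfl
    _ ≤ chebM k' H' L' + c := by
        gcongr; exact le_iSup₂ (f := fun n (_ : 1 ≤ n) => chebMn k' n H' L') n hn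

theorem chebMDual_le_iSup_add (hn : 1 ≤ n) {w : Fin n → X} (w' : Fin n → H')
    (h : ∀ x' ∈ L', ∃ x ∈ L, ∀ j, k' x' (w' j) ≤ k x (w j) + c) :
    chebMDual k' H' L' ≤ (⨆ x : L, (∑ j, k x (w j)) / n) + c :=
  calc chebMDual k' H' L' ≤ chebMnDual k' n H' L' := iInf₂_le n hn
    _ ≤ ⨆ x' : L', (∑ j, k' x' (w' j)) / n := iInf_le _ w'
    _ ≤ (⨆ x : L, (∑ j, k x (w j)) / n) + c := iSup_le fun x' => by
        obtain ⟨x, hx, hxj⟩ := h x' x'.2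
        refine (ENNReal.sum_div_le_sum_div_add (by omega) hxj).trans ?_
        gcongr
        exact le_iSup (fun x : L => (∑ j, k x (w j)) / n) ⟨x, hx⟩

end Rendezvous

theorem clusterPoint_mem_rendezvous_interval_general {X : Type*} [NormedAddCommGroup X]
    [NormedSpace ℝ X]
    (E : ℕ → Submodule ℝ X) (hmono : Monotone E)
    (hdense : Dense (⋃ n, (E n : Set X)))
    (N : ℕ → X → ℝ)
    (hN_smul : ∀ n, ∀ x ∈ E n, ∀ c : ℝ, N n (c • x) = |c| * N n x)
    (hN_conv : ∀ ε > (0 : ℝ), ∃ n₀ : ℕ, ∀ n ≥ n₀, ∀ x ∈ E n, ‖x‖ = 1 → |1 - N n x| ≤ ε)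
    (ρ : ℕ → ℝ≥0∞)
    (hρ : ∀ n : ℕ,
      chebM (fun x y : X => ENNReal.ofReal (N n (x - y)))
          {x : X | x ∈ E n ∧ N n x = 1} {x : X | x ∈ E n ∧ N n x = 1} ≤ ρ n ∧
      ρ n ≤ chebMDual (fun x y : X => ENNReal.ofReal (N n (x - y)))
          {x : X | x ∈ E n ∧ N n x = 1} {x : X | x ∈ E n ∧ N n x = 1})
    (r : ℝ≥0∞) (hr : MapClusterPt r Filter.atTop ρ) :
    chebM (fun x y : X => edist x y) (Metric.sphere (0 : X) 1) (Metric.sphere (0 : X) 1) ≤ r ∧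
    r ≤ chebMDual (fun x y : X => edist x y) (Metric.sphere (0 : X) 1)
        (Metric.sphere (0 : X) 1) := by
  have hcorr {n : ℕ} (w : Fin n → Metric.sphere (0 : X) 1) {ε : ℝ} (hε : 0 < ε) :=
    eventually_exists_sphere_correspondence hmono hdense hN_smul hN_conv w hε
  constructor
  · refine iSup₂_le fun n hn => iSup_le fun w => ?_
    refine le_of_mapClusterPt_of_eventually_le_add hr fun ε hε => ?_
    filter_upwards [hcorr w hε] with m ⟨w', hw'⟩
    refine (iInf_le_chebM_add hn w' fun x hx => ?_).trans (add_le_add (hρ m).1 le_rfl)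
    obtain ⟨v, hv, hvj⟩ := hw' x hx
    refine ⟨v, hv, fun j => ?_⟩
    rw [edist_dist, dist_eq_norm]
    exact ENNReal.ofReal_le_ofReal_add_of_abs_sub_le (by rw [abs_sub_comm]; exact hvj j)
  · refine le_iInf₂ fun n hn => le_iInf fun w => ?_
    refine mapClusterPt_le_of_eventually_le_add hr fun ε hε => ?_
    filter_upwards [hcorr w hε] with m ⟨w', hw'⟩
    refine (hρ m).2.trans (chebMDual_le_iSup_add hn w' fun x hx => ?_)
    obtain ⟨v, hv, hvj⟩ := hw' x hx
    refine ⟨v, hv, fun j => ?_⟩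
    rw [edist_dist, dist_eq_norm]
    exact ENNReal.ofReal_le_ofReal_add_of_abs_sub_le (hvj j)

/-- Let `X` be a real normed space, `(X_n)` an increasing sequence of
subspaces with dense union, each carrying its own norm `‖·‖_n`, such that
`sup_{x ∈ X_n ∩ S_X} |1 - ‖x‖_n| → 0`. If `ρ_n` lies in the rendezvous interval of
the unit sphere of `(X_n,‖·‖_n)`, then every accumulation point of `(ρ_n)` lies in
the rendezvous interval of `S_X`. -/
theorem clusterPoint_mem_rendezvous_interval {X : Type*} [NormedAddCommGroup X]
    [NormedSpace ℝ X]
    (E : ℕ → Submodule ℝ X) (hmono : Monotone E)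
    (hdense : Dense (⋃ n, (E n : Set X)))
    (N : ℕ → X → ℝ)
    (hN_zero : ∀ n, ∀ x ∈ E n, (N n x = 0 ↔ x = 0))
    (hN_add : ∀ n, ∀ x ∈ E n, ∀ y ∈ E n, N n (x + y) ≤ N n x + N n y)
    (hN_smul : ∀ n, ∀ x ∈ E n, ∀ c : ℝ, N n (c • x) = |c| * N n x)
    (hN_conv : ∀ ε > (0 : ℝ), ∃ n₀ : ℕ, ∀ n ≥ n₀, ∀ x ∈ E n, ‖x‖ = 1 → |1 - N n x| ≤ ε)
    (ρ : ℕ → ℝ≥0∞)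
    (hρ : ∀ n : ℕ,
      chebM (fun x y : X => ENNReal.ofReal (N n (x - y)))
          {x : X | x ∈ E n ∧ N n x = 1} {x : X | x ∈ E n ∧ N n x = 1} ≤ ρ n ∧
      ρ n ≤ chebMDual (fun x y : X => ENNReal.ofReal (N n (x - y)))
          {x : X | x ∈ E n ∧ N n x = 1} {x : X | x ∈ E n ∧ N n x = 1})
    (r : ℝ≥0∞) (hr : MapClusterPt r Filter.atTop ρ) :
    chebM (fun x y : X => edist x y) (Metric.sphere (0 : X) 1) (Metric.sphere (0 : X) 1) ≤ r ∧
    r ≤ chebMDual (fun x y : X => edist x y) (Metric.sphere (0 : X) 1)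
        (Metric.sphere (0 : X) 1) :=
  clusterPoint_mem_rendezvous_interval_general E hmono hdense N hN_smul hN_conv ρ hρ r hr
end

section
/- Let X be a real normed space and let (X_n) be an increasing sequence of nonzero finite-dimensional linear subspaces of X such that ⋃_{n=1}^∞ X_n is dense in X. For each n let ρ_n ∈ R(S_{X_n}), the rendezvous interval of the unit sphere of X_n (with the norm inherited from X and kernel the norm distance). Then every accumulation point ρ of the sequence (ρ_n) belongs to R(S_X), the rendezvous interval of the unit sphere of X with kernel k(x,y) := ‖x−y‖. -/
open MeasureTheory ENNReal
open scoped BigOperators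

open Rendezvous

/-!
Fix a configuration `w₁, …, wₘ` on `S_X` and `δ > 0`. Normalising nearby points of the dense
union gives, for all large `n`, points `vⱼ ∈ S_{X_n}` with `‖wⱼ - vⱼ‖ ≤ δ`; then the averages
`(1/m) ∑ ‖x - wⱼ‖` and `(1/m) ∑ ‖x - vⱼ‖` differ by at most `δ` for every `x`. Hence, eventually
in `n`, the infimum over `S_X` of the `w`-average is at most `M(S_{X_n}) + δ ≤ ρₙ + δ`, and
`ρₙ ≤ M̄(S_{X_n})` is at most its supremum over `S_X` plus `δ`. Both bounds pass to every cluster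
point `ρ`, and taking the supremum, resp. infimum, over all configurations `w` gives
`M(S_X) ≤ ρ ≤ M̄(S_X)`.
-/

open scoped NNReal
open Filter Metric

section ClusterPoint

variable {ι : Type*} {l : Filter ι} {u : ι → ℝ≥0∞} {r : ℝ≥0∞}

theorem MapClusterPt.le_of_forall_eventually_le_add (hr : MapClusterPt r l u) {b : ℝ≥0∞}
    (h : ∀ ε : ℝ≥0, 0 < ε → ∀ᶠ i in l, u i ≤ b + ε) : r ≤ b :=
  ENNReal.le_of_forall_pos_le_add fun ε hε _ => isClosed_Iic.mem_of_mapClusterPt hr (h ε hε)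

theorem MapClusterPt.ge_of_forall_eventually_le_add (hr : MapClusterPt r l u) {a : ℝ≥0∞}
    (h : ∀ ε : ℝ≥0, 0 < ε → ∀ᶠ i in l, a ≤ u i + ε) : a ≤ r :=
  ENNReal.le_of_forall_pos_le_add fun ε hε _ =>
    (isClosed_le continuous_const (continuous_add_const _)).mem_of_mapClusterPt hr (h ε hε)

end ClusterPoint

section MeanDistance

variable {X : Type*} [PseudoEMetricSpace X] {m : ℕ} {w v : Fin m → X} {δ : ℝ≥0∞}

theorem mean_edist_le_mean_edist_add (x : X) (h : ∀ j, edist (w j) (v j) ≤ δ) :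
    (∑ j, edist x (w j)) / m ≤ (∑ j, edist x (v j)) / m + δ :=
  calc (∑ j, edist x (w j)) / m ≤ (∑ j, (edist x (v j) + δ)) / m := by
        gcongr with j
        exact (edist_triangle _ _ _).trans (add_le_add_right ((edist_comm (w j) (v j)) ▸ h j) _)
    _ = (∑ j, edist x (v j)) / m + m * (δ / m) := by
        rw [Finset.sum_add_distrib, Finset.sum_const, Finset.card_fin, nsmul_eq_mul,
          ENNReal.add_div, mul_div_assoc]
    _ ≤ (∑ j, edist x (v j)) / m + δ := by gcongr; exact ENNReal.mul_div_le

variable {L L' H' : Set X}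

theorem iInf_mean_edist_le_chebM_add (hL : L' ⊆ L) (hm : 1 ≤ m) (v : Fin m → H')
    (h : ∀ j, edist (w j) (v j) ≤ δ) :
    ⨅ x : L, (∑ j, edist (x : X) (w j)) / m ≤ chebM (fun x y => edist x y) H' L' + δ :=
  calc ⨅ x : L, (∑ j, edist (x : X) (w j)) / m
      ≤ ⨅ x : L', (∑ j, edist (x : X) (w j)) / m :=
        le_iInf fun x => iInf_le_of_le ⟨x, hL x.2⟩ le_rfl
    _ ≤ ⨅ x : L', ((∑ j, edist (x : X) (v j)) / m + δ) :=
        iInf_mono fun x => mean_edist_le_mean_edist_add _ h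
    _ = (⨅ x : L', (∑ j, edist (x : X) (v j)) / m) + δ := ENNReal.iInf_add.symm
    _ ≤ chebMn (fun x y => edist x y) m H' L' + δ := by
        gcongr
        exact le_iSup (fun v' : Fin m → H' => ⨅ x : L', (∑ j, edist (x : X) (v' j)) / m) v
    _ ≤ chebM (fun x y => edist x y) H' L' + δ := by
        gcongr
        exact le_iSup₂_of_le (f := fun n (_ : 1 ≤ n) => chebMn (fun x y : X => edist x y) n H' L')
          m hm le_rfl

theorem chebMDual_le_iSup_mean_edist_add (hL : L' ⊆ L) (hm : 1 ≤ m) (v : Fin m → H')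
    (h : ∀ j, edist (w j) (v j) ≤ δ) :
    chebMDual (fun x y => edist x y) H' L' ≤ (⨆ x : L, (∑ j, edist (x : X) (w j)) / m) + δ :=
  calc chebMDual (fun x y => edist x y) H' L'
      ≤ chebMnDual (fun x y => edist x y) m H' L' :=
        iInf₂_le (f := fun n (_ : 1 ≤ n) => chebMnDual (fun x y : X => edist x y) n H' L') m hm
    _ ≤ ⨆ x : L', (∑ j, edist (x : X) (v j)) / m :=
        iInf_le (fun v' : Fin m → H' => ⨆ x : L', (∑ j, edist (x : X) (v' j)) / m) v
    _ ≤ (⨆ x : L, (∑ j, edist (x : X) (w j)) / m) + δ :=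
        iSup_le fun x =>
          (mean_edist_le_mean_edist_add _ fun j => (edist_comm _ _).trans_le (h j)).trans
            (add_le_add_left (le_iSup_of_le (⟨x, hL x.2⟩ : L) le_rfl) δ)

end MeanDistance

theorem Monotone.eventually_exists_edist_lt {X ι : Type*} [PseudoEMetricSpace X] [Finite ι]
    {s : ℕ → Set X} (hs : Monotone s) {w : ι → X} (hw : ∀ j, w j ∈ closure (⋃ n, s n))
    {δ : ℝ≥0∞} (hδ : 0 < δ) : ∀ᶠ n in atTop, ∃ v : ι → s n, ∀ j, edist (w j) (v j) < δ := by
  have hnear : ∀ j, ∃ N, ∃ y ∈ s N, edist (w j) y < δ := fun j => by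
    obtain ⟨y, hy, hwy⟩ := EMetric.mem_closure_iff.1 (hw j) δ hδ
    obtain ⟨N, hN⟩ := Set.mem_iUnion.1 hy
    exact ⟨N, y, hN, hwy⟩
  choose N y hy hwy using hnear
  filter_upwards [eventually_all.2 fun j => eventually_ge_atTop (N j)] with n hn
  exact ⟨fun j => ⟨y j, hs (hn j) (hy j)⟩, hwy⟩

theorem sphere_subset_closure_sphere_inter {E : Type*} [NormedAddCommGroup E] [NormedSpace ℝ E]
    {s : Set E} (hs : Dense s) (hsmul : ∀ c : ℝ, 0 < c → ∀ x ∈ s, c • x ∈ s) :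
    sphere (0 : E) 1 ⊆ closure (sphere 0 1 ∩ s) := by
  intro w hw
  have hw1 : ‖w‖ = 1 := mem_sphere_zero_iff_norm.1 hw
  have hw0 : w ≠ 0 := ne_of_mem_sphere hw one_ne_zero
  set f : E → E := fun x => ‖x‖⁻¹ • x
  have hf : ContinuousAt f w :=
    (continuous_norm.continuousAt.inv₀ (norm_ne_zero_iff.2 hw0)).smul continuousAt_id
  have hfw : f w = w := by simp [f, hw1]
  rw [← hfw]
  refine closure_mono ?_
    (mem_closure_image hf (hs.open_subset_closure_inter isOpen_compl_singleton hw0))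
  rintro _ ⟨x, ⟨hx0, hxs⟩, rfl⟩
  exact ⟨by simp [f, norm_smul, norm_ne_zero_iff.2 hx0],
    hsmul _ (inv_pos.2 (norm_pos_iff.2 hx0)) x hxs⟩

theorem clusterPoint_mem_rendezvous_interval_of_finiteDimensional_general {X : Type*}
    [NormedAddCommGroup X] [NormedSpace ℝ X]
    (E : ℕ → Submodule ℝ X) (hmono : Monotone E)
    (hdense : Dense (⋃ n, (E n : Set X)))
    (ρ : ℕ → ℝ≥0∞)
    (hρ : ∀ n : ℕ,
      chebM (fun x y : X => edist x y)
          {x : X | x ∈ E n ∧ ‖x‖ = 1} {x : X | x ∈ E n ∧ ‖x‖ = 1} ≤ ρ n ∧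
      ρ n ≤ chebMDual (fun x y : X => edist x y)
          {x : X | x ∈ E n ∧ ‖x‖ = 1} {x : X | x ∈ E n ∧ ‖x‖ = 1})
    (r : ℝ≥0∞) (hr : MapClusterPt r Filter.atTop ρ) :
    chebM (fun x y : X => edist x y) (Metric.sphere (0 : X) 1) (Metric.sphere (0 : X) 1) ≤ r ∧
    r ≤ chebMDual (fun x y : X => edist x y) (Metric.sphere (0 : X) 1)
        (Metric.sphere (0 : X) 1) := by
  set T : ℕ → Set X := fun n => {x : X | x ∈ E n ∧ ‖x‖ = 1}
  have hT : Monotone T := fun m n hmn x hx => ⟨hmono hmn hx.1, hx.2⟩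
  have hTS : ∀ n, T n ⊆ sphere 0 1 := fun n x hx => mem_sphere_zero_iff_norm.2 hx.2
  have hST : sphere (0 : X) 1 ⊆ closure (⋃ n, T n) := by
    refine (sphere_subset_closure_sphere_inter hdense ?_).trans (closure_mono ?_)
    · rintro c - x hx
      obtain ⟨n, hn⟩ := Set.mem_iUnion.1 hx
      exact Set.mem_iUnion.2 ⟨n, (E n).smul_mem c hn⟩
    · rintro x ⟨hx, hxE⟩
      obtain ⟨n, hn⟩ := Set.mem_iUnion.1 hxE
      exact Set.mem_iUnion.2 ⟨n, hn, mem_sphere_zero_iff_norm.1 hx⟩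
  have happrox : ∀ {m} (w : Fin m → sphere (0 : X) 1) (δ : ℝ≥0), 0 < δ →
      ∀ᶠ n in atTop, ∃ v : Fin m → T n, ∀ j, edist (w j : X) (v j) ≤ δ := fun w δ hδ =>
    (hT.eventually_exists_edist_lt (fun j => hST (w j).2) (by exact_mod_cast hδ)).mono
      fun n ⟨v, hv⟩ => ⟨v, fun j => (hv j).le⟩
  constructor
  · refine iSup₂_le fun m hm => iSup_le fun w => hr.ge_of_forall_eventually_le_add fun δ hδ => ?_
    filter_upwards [happrox w δ hδ] with n ⟨v, hv⟩
    exact (iInf_mean_edist_le_chebM_add (hTS n) hm v hv).trans (add_le_add_left (hρ n).1 _)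
  · refine le_iInf₂ fun m hm => le_iInf fun w => hr.le_of_forall_eventually_le_add fun δ hδ => ?_
    filter_upwards [happrox w δ hδ] with n ⟨v, hv⟩
    exact (hρ n).2.trans (chebMDual_le_iSup_mean_edist_add (hTS n) hm v hv)

/-- Let `X` be a real normed space and `(X_n)` an increasing sequence
of nonzero finite-dimensional subspaces with dense union. If `ρ_n` lies in the
rendezvous interval of the unit sphere of `X_n` (with the inherited norm), then every
accumulation point of `(ρ_n)` lies in the rendezvous interval of `S_X`. -/
theorem clusterPoint_mem_rendezvous_interval_of_finiteDimensional {X : Type*}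
    [NormedAddCommGroup X] [NormedSpace ℝ X]
    (E : ℕ → Submodule ℝ X) (hmono : Monotone E) (hnz : ∀ n, E n ≠ ⊥)
    (hfd : ∀ n, FiniteDimensional ℝ (E n))
    (hdense : Dense (⋃ n, (E n : Set X)))
    (ρ : ℕ → ℝ≥0∞)
    (hρ : ∀ n : ℕ,
      chebM (fun x y : X => edist x y)
          {x : X | x ∈ E n ∧ ‖x‖ = 1} {x : X | x ∈ E n ∧ ‖x‖ = 1} ≤ ρ n ∧
      ρ n ≤ chebMDual (fun x y : X => edist x y)
          {x : X | x ∈ E n ∧ ‖x‖ = 1} {x : X | x ∈ E n ∧ ‖x‖ = 1})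
    (r : ℝ≥0∞) (hr : MapClusterPt r Filter.atTop ρ) :
    chebM (fun x y : X => edist x y) (Metric.sphere (0 : X) 1) (Metric.sphere (0 : X) 1) ≤ r ∧
    r ≤ chebMDual (fun x y : X => edist x y) (Metric.sphere (0 : X) 1)
        (Metric.sphere (0 : X) 1) :=
  clusterPoint_mem_rendezvous_interval_of_finiteDimensional_general E hmono hdense ρ hρ r hr
end
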